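/- arXiv:1402.1899 — 12 statements merged into one kernel-verified Lean document; each statement's English description precedes it below -/
import Mathlib

section
/- Suppose the outputs are generated noise-free as y_t = ⟨x_t, θ^o⟩ + f_t for all t ∈ 𝕀, for some θ^o ∈ ℝ^n and f = (f_1, …, f_N) ∈ ℝ^N. Assume that for every subset I ⊆ 𝕀 with |I| > n, the subvector f_I does not belong to the column space of X_I^⊤ whenever f_I ≠ 0. If |I⁰(θ^o)| > n (equivalently, the number of indices t with f_t = 0 exceeds n), then θ^o minimizes the ℓ0 objective: ‖φ(θ^o)‖₀ ≤ ‖φ(θ)‖₀ for all θ ∈ ℝ^n. -/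
open Matrix Finset

/-- If the data are noise-free, `f_I ∉ im(X_I^⊤)` whenever `f_I ≠ 0`
for all index sets `I` with `|I| > n`, and `|I⁰(θ^o)| > n`, then `θ^o` minimizes
the ℓ0 objective `‖φ(θ)‖₀`. -/
theorem stmt0 (n N : ℕ) (hn : 1 ≤ n) (hN : 1 ≤ N)
    (x : Fin N → Fin n → ℝ) (y : Fin N → ℝ)
    (θo : Fin n → ℝ) (f : Fin N → ℝ)
    (hdata : ∀ t, y t = x t ⬝ᵥ θo + f t)
    (hindep : ∀ I : Finset (Fin N), n < I.card →
      (∃ θ : Fin n → ℝ, ∀ t ∈ I, f t = x t ⬝ᵥ θ) → ∀ t ∈ I, f t = 0)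
    (hcard : n < (univ.filter (fun t => x t ⬝ᵥ θo = y t)).card) :
    ∀ θ : Fin n → ℝ,
      (univ.filter (fun t => y t - x t ⬝ᵥ θo ≠ 0)).card ≤
        (univ.filter (fun t => y t - x t ⬝ᵥ θ ≠ 0)).card := by
  intro θ
  have hf : ∀ t, y t - x t ⬝ᵥ θo = f t := fun t => by rw [hdata t]; ring
  have hE : (univ.filter (fun t => x t ⬝ᵥ θo = y t)) =
      (univ.filter (fun t => f t = 0)) := by
    apply Finset.filter_congr
    intro t _
    rw [← hf t]
    constructor
    · intro h; rw [h]; ring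
    · intro h; linarith [h]
  rw [hE] at hcard
  -- card of zero sets
  have key : (univ.filter (fun t => y t - x t ⬝ᵥ θ = 0)).card ≤
      (univ.filter (fun t => f t = 0)).card ∨
      (univ.filter (fun t => y t - x t ⬝ᵥ θ = 0)).card ≤ n := by
    by_cases h : (univ.filter (fun t => y t - x t ⬝ᵥ θ = 0)).card ≤ n
    · exact Or.inr h
    · left
      apply Finset.card_le_card
      intro t ht
      simp only [mem_filter, mem_univ, true_and] at ht ⊢
      refine hindep _ (lt_of_not_ge h) ⟨θ - θo, ?_⟩ t (by simp [ht])
      intro s hs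
      simp only [mem_filter, mem_univ, true_and] at hs
      have := hf s
      have := hdata s
      rw [dotProduct_sub]
      linarith
  have h1 := Finset.card_filter_add_card_filter_not
    (s := (univ : Finset (Fin N))) (p := fun t => y t - x t ⬝ᵥ θo ≠ 0)
  have h2 := Finset.card_filter_add_card_filter_not
    (s := (univ : Finset (Fin N))) (p := fun t => y t - x t ⬝ᵥ θ ≠ 0)
  have e1 : (univ.filter (fun t => ¬ y t - x t ⬝ᵥ θo ≠ 0)) =
      (univ.filter (fun t => f t = 0)) := by
    apply Finset.filter_congr
    intro t _
    rw [← hf t]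
    simp
  have e2 : (univ.filter (fun t => ¬ y t - x t ⬝ᵥ θ ≠ 0)) =
      (univ.filter (fun t => y t - x t ⬝ᵥ θ = 0)) := by
    apply Finset.filter_congr; intro t _; simp
  rw [e1] at h1
  rw [e2] at h2
  simp only [Finset.card_univ, Fintype.card_fin] at h1 h2
  omega
end

section
/- Suppose rank(X) = n and the outputs are generated noise-free as y_t = ⟨x_t, θ^o⟩ + f_t for all t ∈ 𝕀, for some θ^o ∈ ℝ^n and f = (f_1, …, f_N) ∈ ℝ^N. If the number of zero entries of f satisfies |{t ∈ 𝕀 : f_t = 0}| ≥ (N + ν_n(X))/2, then θ^o is the unique minimizer of the ℓ0 objective: for every θ ≠ θ^o, ‖φ(θ^o)‖₀ < ‖φ(θ)‖₀. -/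
/-!
Put `d = θ^o - θ ≠ 0`. The residual of `θ` is `f + Xᵀ d`, so it can vanish at `t` only if
`f_t ≠ 0` or `⟨x_t, d⟩ = 0`. Fewer than `ν_n(X)` regressors are orthogonal to `d`, since any
`ν_n(X)` of them span `ℝ^n`. Hence `θ` has fewer than `ν_n(X) + ‖f‖₀` zero residuals, and the
counting hypothesis `2 · #{f_t = 0} ≥ N + ν_n(X)` turns this into `‖f‖₀ < ‖φ(θ)‖₀`.
-/

open Matrix Finset

/-- The `n × |S|` submatrix of the regressor matrix `X` formed by the columns
(regressors) indexed by the finite set `S`. -/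
noncomputable def colSub (n N : ℕ) (x : Fin N → Fin n → ℝ) (S : Finset (Fin N)) :
    Matrix (Fin n) {t // t ∈ S} ℝ :=
  Matrix.of fun i t => x t.1 i

/-- `ν_n(X)`: the smallest integer `m` such that every `n × m` submatrix of
columns of `X` has rank `n`. -/
noncomputable def nuX (n N : ℕ) (x : Fin N → Fin n → ℝ) : ℕ :=
  sInf {m : ℕ | ∀ S : Finset (Fin N), S.card = m → (colSub n N x S).rank = n}

theorem Matrix.rank_lt_card_height_of_vecMul_eq_zero {m ι K : Type*} [Field K] [Fintype m]
    [Fintype ι] {A : Matrix m ι K} {v : m → K} (hv : v ≠ 0) (hvA : v ᵥ* A = 0) :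
    A.rank < Fintype.card m := by
  refine A.rank_le_card_height.lt_of_ne fun h => hv ?_
  have hrows : LinearIndependent K A.row := by
    rw [linearIndependent_iff_card_eq_finrank_span, Set.finrank, ← rank_eq_finrank_span_row, h]
  have hsum : ∑ i, v i • A.row i = 0 := by
    rw [← hvA]; ext j; simp [vecMul, dotProduct]
  funext i
  exact Fintype.linearIndependent_iff.mp hrows v hsum i

theorem Finset.card_filter_eq_zero_le_add {ι G : Type*} [Fintype ι] [DecidableEq ι]
    [AddGroup G] [DecidableEq G] (f g : ι → G) :
    #{t | f t = 0} ≤ #{t | g t = 0} + #{t | f t + g t ≠ 0} := by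
  refine (card_le_card fun t ht => ?_).trans (card_union_le _ _)
  simp only [mem_filter, mem_univ, true_and, mem_union] at ht ⊢
  by_cases hfg : f t + g t = 0
  · left; simpa [ht] using hfg
  · right; exact hfg

section Regressors

variable {n N : ℕ} {x : Fin N → Fin n → ℝ}

theorem rank_colSub_univ :
    (colSub n N x univ).rank = (Matrix.of fun i t => x t i : Matrix (Fin n) (Fin N) ℝ).rank := by
  have : colSub n N x univ = (Matrix.of fun i t => x t i).submatrix (Equiv.refl (Fin n))
      (Equiv.subtypeUnivEquiv mem_univ) := rfl
  rw [this, rank_submatrix]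

theorem rank_colSub_of_card_eq_nuX
    (hrank : (Matrix.of fun i t => x t i : Matrix (Fin n) (Fin N) ℝ).rank = n)
    {S : Finset (Fin N)} (hS : #S = nuX n N x) : (colSub n N x S).rank = n := by
  -- `rank X = n` makes the set defining `nuX` nonempty; otherwise `sInf` would be the junk value 0.
  have hN : N ∈ {m : ℕ | ∀ S : Finset (Fin N), #S = m → (colSub n N x S).rank = n} := by
    intro S hS
    rw [eq_univ_of_card S (by simpa using hS), rank_colSub_univ, hrank]
  exact Nat.sInf_mem ⟨N, hN⟩ S hS

theorem card_filter_dotProduct_eq_zero_lt_nuX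
    (hrank : (Matrix.of fun i t => x t i : Matrix (Fin n) (Fin N) ℝ).rank = n)
    {d : Fin n → ℝ} (hd : d ≠ 0) : #{t | x t ⬝ᵥ d = 0} < nuX n N x := by
  by_contra! h
  obtain ⟨S, hSsub, hScard⟩ := exists_subset_card_eq h
  have hdS : d ᵥ* colSub n N x S = 0 := by
    funext t
    have ht : x t ⬝ᵥ d = 0 := (mem_filter.mp (hSsub t.2)).2
    simpa [vecMul, colSub, dotProduct_comm] using ht
  have := rank_lt_card_height_of_vecMul_eq_zero hd hdS
  rw [rank_colSub_of_card_eq_nuX hrank hScard, Fintype.card_fin] at this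
  exact this.false

end Regressors

theorem stmt1_general (n N : ℕ)
    (x : Fin N → Fin n → ℝ) (y : Fin N → ℝ)
    (θo : Fin n → ℝ) (f : Fin N → ℝ)
    (hrank : (Matrix.of fun i t => x t i : Matrix (Fin n) (Fin N) ℝ).rank = n)
    (hdata : ∀ t, y t = x t ⬝ᵥ θo + f t)
    (hcard : (((univ.filter (fun t => f t = 0)).card : ℝ)) ≥ ((N : ℝ) + (nuX n N x : ℝ)) / 2) :
    ∀ θ : Fin n → ℝ, θ ≠ θo →
      (univ.filter (fun t => y t - x t ⬝ᵥ θo ≠ 0)).card <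
        (univ.filter (fun t => y t - x t ⬝ᵥ θ ≠ 0)).card := by
  intro θ hθ
  have hres_o : ∀ t, y t - x t ⬝ᵥ θo = f t := fun t => by rw [hdata]; ring
  have hres : ∀ t, y t - x t ⬝ᵥ θ = f t + x t ⬝ᵥ (θo - θ) := fun t => by
    rw [hdata, dotProduct_sub]; ring
  simp only [hres_o, hres]
  have hortho := card_filter_dotProduct_eq_zero_lt_nuX hrank (sub_ne_zero.mpr hθ.symm)
  have hzeros := card_filter_eq_zero_le_add f fun t => x t ⬝ᵥ (θo - θ)
  have hsplit : #{t | f t = 0} + #{t | f t ≠ 0} = N := by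
    simpa using card_filter_add_card_filter_not (s := univ) fun t => f t = 0
  have hcount : N + nuX n N x ≤ 2 * #{t | f t = 0} := by
    exact_mod_cast (by linarith : (N : ℝ) + nuX n N x ≤ 2 * (#{t | f t = 0} : ℕ))
  omega

/-- Noise-free data, `rank X = n`, and
`|{t : f_t = 0}| ≥ (N + ν_n(X)) / 2` imply that `θ^o` is the unique minimizer
of the ℓ0 objective. -/
theorem stmt1 (n N : ℕ) (hn : 1 ≤ n) (hN : 1 ≤ N)
    (x : Fin N → Fin n → ℝ) (y : Fin N → ℝ)
    (θo : Fin n → ℝ) (f : Fin N → ℝ)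
    (hrank : (Matrix.of fun i t => x t i : Matrix (Fin n) (Fin N) ℝ).rank = n)
    (hdata : ∀ t, y t = x t ⬝ᵥ θo + f t)
    (hcard : (((univ.filter (fun t => f t = 0)).card : ℝ)) ≥ ((N : ℝ) + (nuX n N x : ℝ)) / 2) :
    ∀ θ : Fin n → ℝ, θ ≠ θo →
      (univ.filter (fun t => y t - x t ⬝ᵥ θo ≠ 0)).card <
        (univ.filter (fun t => y t - x t ⬝ᵥ θ ≠ 0)).card :=
  stmt1_general n N x y θo f hrank hdata hcard
end

section
/- A vector θ* ∈ ℝ^n solves the ℓ1 problem (i.e., ‖φ(θ*)‖₁ ≤ ‖φ(θ)‖₁ for all θ ∈ ℝ^n) if and only if there exist real numbers λ_t ∈ [−1, 1], t ∈ I⁰(θ*), such that Σ_{t ∈ I⁺(θ*)} x_t − Σ_{t ∈ I⁻(θ*)} x_t = Σ_{t ∈ I⁰(θ*)} λ_t x_t (with the convention that an empty sum equals the zero vector). -/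
/-!
Write `r(θ) = y - ⟨x, θ⟩` and `v = ∑_{I⁺} x_t - ∑_{I⁻} x_t`. For small `ε > 0`, moving from
`θ*` to `θ* + ε d` changes the ℓ1 objective by exactly `ε (⟨v, d⟩ + ∑_{I⁰} |⟨x_t, d⟩|)`, so
optimality forces `⟨v, d⟩ ≤ ∑_{I⁰} |⟨x_t, d⟩|` for every `d`. The right-hand side is the
support function of the zonotope `{∑_{I⁰} λ_t x_t : λ_t ∈ [-1, 1]}`, which is compact and
convex, so Hahn–Banach separation puts `v` in it. Conversely, the multipliers `σ = -1` on `I⁺`,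
`1` on `I⁻`, `λ` on `I⁰` satisfy `|σ_t| ≤ 1` and `∑ σ_t x_t = 0`, so `∑ σ_t r_t(θ)` is a lower
bound of `‖r(θ)‖₁` that does not depend on `θ` and is attained at `θ*`.
-/

open Matrix Finset Filter Topology

theorem sum_ite_gt_lt {ι M : Type*} [Fintype ι] [AddCommMonoid M] (a y : ι → ℝ)
    (f g h : ι → M) :
    ∑ t, (if a t > y t then f t else if a t < y t then g t else h t) =
      ∑ t ∈ univ.filter (fun t => a t > y t), f t
        + ∑ t ∈ univ.filter (fun t => a t < y t), g t
        + ∑ t ∈ univ.filter (fun t => a t = y t), h t := by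
  simp only [sum_filter, ← sum_add_distrib]
  refine sum_congr rfl fun t _ => ?_
  rcases lt_trichotomy (a t) (y t) with h | h | h
  · simp [h, h.ne, h.not_gt]
  · simp [h]
  · simp [h, h.ne', h.not_gt]

theorem abs_sub_add_mul_eventually_eq (a y b : ℝ) :
    ∀ᶠ ε in 𝓝[>] 0, |y - (a + ε * b)| =
      |y - a| + ε * (if a > y then b else if a < y then -b else |b|) := by
  have hcont : Tendsto (fun ε : ℝ => y - (a + ε * b)) (𝓝[>] 0) (𝓝 (y - a)) := by
    have : Continuous fun ε : ℝ => y - (a + ε * b) := by fun_prop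
    simpa using (this.tendsto 0).mono_left nhdsWithin_le_nhds
  rcases lt_trichotomy a y with h | rfl | h
  · filter_upwards [hcont.eventually_const_lt (sub_pos.2 h)] with ε hε
    rw [abs_of_pos hε, abs_of_pos (sub_pos.2 h), if_neg h.not_gt, if_pos h]
    ring
  · filter_upwards [self_mem_nhdsWithin] with ε (hε : 0 < ε)
    simp [abs_mul, abs_of_pos hε]
  · filter_upwards [hcont.eventually_lt_const (sub_neg.2 h)] with ε hε
    rw [abs_of_neg hε, abs_of_neg (sub_neg.2 h), if_pos h]
    ring

theorem sum_abs_sub_dotProduct_add_smul_eventually_eq {ι m : Type*} [Fintype ι] [Fintype m]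
    (x : ι → m → ℝ) (y : ι → ℝ) (θ d : m → ℝ) :
    ∀ᶠ ε in 𝓝[>] 0, ∑ t, |y t - x t ⬝ᵥ (θ + ε • d)| =
      ∑ t, |y t - x t ⬝ᵥ θ| + ε * ((∑ t ∈ univ.filter (fun t => x t ⬝ᵥ θ > y t), x t
        - ∑ t ∈ univ.filter (fun t => x t ⬝ᵥ θ < y t), x t) ⬝ᵥ d
        + ∑ t ∈ univ.filter (fun t => x t ⬝ᵥ θ = y t), |x t ⬝ᵥ d|) := by
  filter_upwards [eventually_all.2 fun t =>
    abs_sub_add_mul_eventually_eq (x t ⬝ᵥ θ) (y t) (x t ⬝ᵥ d)] with ε hε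
  simp only [dotProduct_add, dotProduct_smul, smul_eq_mul, hε, sum_add_distrib, ← mul_sum,
    sum_ite_gt_lt (fun t => x t ⬝ᵥ θ) y, sub_dotProduct, sum_dotProduct, sum_neg_distrib]
  ring

theorem dotProduct_le_sum_abs_of_forall_sum_abs_le {ι m : Type*} [Fintype ι] [Fintype m]
    (x : ι → m → ℝ) (y : ι → ℝ) (θ₀ : m → ℝ)
    (hmin : ∀ θ, ∑ t, |y t - x t ⬝ᵥ θ₀| ≤ ∑ t, |y t - x t ⬝ᵥ θ|) (d : m → ℝ) :
    (∑ t ∈ univ.filter (fun t => x t ⬝ᵥ θ₀ > y t), x t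
        - ∑ t ∈ univ.filter (fun t => x t ⬝ᵥ θ₀ < y t), x t) ⬝ᵥ d ≤
      ∑ t ∈ univ.filter (fun t => x t ⬝ᵥ θ₀ = y t), |x t ⬝ᵥ d| := by
  obtain ⟨ε, hε, hεpos⟩ := ((sum_abs_sub_dotProduct_add_smul_eventually_eq x y θ₀ (-d)).and
    self_mem_nhdsWithin).exists
  have h := hmin (θ₀ + ε • -d)
  rw [hε, le_add_iff_nonneg_right, mul_nonneg_iff_of_pos_left hεpos] at h
  simp only [dotProduct_neg, abs_neg] at h
  linarith

theorem exists_sum_smul_eq_of_forall_le_sum_abs {E ι : Type*} [TopologicalSpace E]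
    [AddCommGroup E] [Module ℝ E] [IsTopologicalAddGroup E] [ContinuousSMul ℝ E]
    [LocallyConvexSpace ℝ E] [T2Space E] (s : Finset ι) (x : ι → E) (v : E)
    (h : ∀ f : StrongDual ℝ E, f v ≤ ∑ t ∈ s, |f (x t)|) :
    ∃ c : ι → ℝ, (∀ t ∈ s, c t ∈ Set.Icc (-1) 1) ∧ v = ∑ t ∈ s, c t • x t := by
  let L : (ι → ℝ) →L[ℝ] E := ∑ t ∈ s, (ContinuousLinearMap.proj t).smulRight (x t)
  have hL : ∀ c, L c = ∑ t ∈ s, c t • x t := by simp [L]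
  set Z := L '' Set.univ.pi fun _ => Set.Icc (-1 : ℝ) 1
  by_contra! hv
  have hvZ : v ∉ Z := by
    rintro ⟨c, hc, rfl⟩
    exact hv c (fun t _ => hc t trivial) (hL c)
  obtain ⟨f, u, hZ, hu⟩ := geometric_hahn_banach_closed_point
    ((convex_pi fun _ _ => convex_Icc _ _).linear_image L.toLinearMap)
    ((isCompact_univ_pi fun _ => isCompact_Icc).image L.continuous).isClosed hvZ
  have hsign : L (fun t => (SignType.sign (f (x t)) : ℝ)) ∈ Z := by
    refine Set.mem_image_of_mem _ fun t _ => ?_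
    rcases SignType.sign (f (x t)) with _ | _ | _ <;> norm_num
  have hf : f (L fun t => (SignType.sign (f (x t)) : ℝ)) = ∑ t ∈ s, |f (x t)| := by
    simp [hL, sign_mul_self]
  linarith [hZ _ hsign, h f]

theorem exists_sum_smul_eq_of_forall_dotProduct_le_sum_abs {ι m : Type*} [Fintype m]
    [DecidableEq m] (s : Finset ι) (x : ι → m → ℝ) (v : m → ℝ)
    (h : ∀ d, v ⬝ᵥ d ≤ ∑ t ∈ s, |x t ⬝ᵥ d|) :
    ∃ c : ι → ℝ, (∀ t ∈ s, c t ∈ Set.Icc (-1) 1) ∧ v = ∑ t ∈ s, c t • x t := by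
  refine exists_sum_smul_eq_of_forall_le_sum_abs s x v fun f => ?_
  have hf : ∀ w, f w = w ⬝ᵥ (dotProductEquiv ℝ m).symm f.toLinearMap := fun w => by
    rw [dotProduct_comm]
    exact (LinearMap.congr_fun ((dotProductEquiv ℝ m).apply_symm_apply _) w).symm
  simp only [hf]
  exact h _

theorem sum_abs_le_of_sum_smul_eq_zero {ι m : Type*} [Fintype ι] [Fintype m]
    (x : ι → m → ℝ) (y : ι → ℝ) (θ₀ : m → ℝ) (σ : ι → ℝ) (hσ : ∀ t, |σ t| ≤ 1)
    (hσx : ∑ t, σ t • x t = 0) (hσr : ∀ t, σ t * (y t - x t ⬝ᵥ θ₀) = |y t - x t ⬝ᵥ θ₀|)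
    (θ : m → ℝ) : ∑ t, |y t - x t ⬝ᵥ θ₀| ≤ ∑ t, |y t - x t ⬝ᵥ θ| := by
  have hconst : ∀ θ' : m → ℝ, ∑ t, σ t * (y t - x t ⬝ᵥ θ') = ∑ t, σ t * y t := by
    intro θ'
    have hzero : ∑ t, σ t * (x t ⬝ᵥ θ') = 0 := by
      simpa [sum_dotProduct, smul_dotProduct] using congrArg (· ⬝ᵥ θ') hσx
    simp only [mul_sub, sum_sub_distrib, hzero, sub_zero]
  calc ∑ t, |y t - x t ⬝ᵥ θ₀| = ∑ t, σ t * (y t - x t ⬝ᵥ θ) := by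
        simp only [← hσr, hconst]
    _ ≤ ∑ t, |y t - x t ⬝ᵥ θ| := sum_le_sum fun t _ => calc
        σ t * (y t - x t ⬝ᵥ θ) ≤ |σ t| * |y t - x t ⬝ᵥ θ| :=
          (le_abs_self _).trans (abs_mul _ _).le
        _ ≤ |y t - x t ⬝ᵥ θ| := mul_le_of_le_one_left (abs_nonneg _) (hσ t)

theorem stmt2_general (n N : ℕ)
    (x : Fin N → Fin n → ℝ) (y : Fin N → ℝ) (θs : Fin n → ℝ) :
    (∀ θ : Fin n → ℝ, ∑ t, |y t - x t ⬝ᵥ θs| ≤ ∑ t, |y t - x t ⬝ᵥ θ|) ↔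
      (∃ lam : Fin N → ℝ,
        (∀ t ∈ univ.filter (fun t => x t ⬝ᵥ θs = y t), lam t ∈ Set.Icc (-1 : ℝ) 1) ∧
        (∑ t ∈ univ.filter (fun t => x t ⬝ᵥ θs > y t), x t)
          - (∑ t ∈ univ.filter (fun t => x t ⬝ᵥ θs < y t), x t)
          = ∑ t ∈ univ.filter (fun t => x t ⬝ᵥ θs = y t), lam t • x t) := by
  constructor
  · exact fun hmin => exists_sum_smul_eq_of_forall_dotProduct_le_sum_abs _ x _
      (dotProduct_le_sum_abs_of_forall_sum_abs_le x y θs hmin)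
  · rintro ⟨lam, hlam, hsum⟩
    refine sum_abs_le_of_sum_smul_eq_zero x y θs
      (fun t => if x t ⬝ᵥ θs > y t then -1 else if x t ⬝ᵥ θs < y t then 1 else lam t)
      (fun t => ?_) ?_ (fun t => ?_)
    · split_ifs with hgt hlt
      · simp
      · simp
      · exact abs_le.2 (hlam t (mem_filter.2 ⟨mem_univ t, (not_lt.1 hgt).antisymm (not_lt.1 hlt)⟩))
    · simp only [ite_smul, neg_one_smul, one_smul, sum_ite_gt_lt (fun t => x t ⬝ᵥ θs) y,
        sum_neg_distrib, ← hsum]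
      abel
    · split_ifs with hgt hlt
      · rw [abs_of_neg (sub_neg.2 hgt)]; ring
      · rw [abs_of_pos (sub_pos.2 hlt)]; ring
      · rw [(not_lt.1 hgt).antisymm (not_lt.1 hlt)]
        simp

/-- `θ*` solves the ℓ1 problem iff there exist numbers
`λ_t ∈ [-1,1]`, `t ∈ I⁰(θ*)`, such that
`∑_{t ∈ I⁺(θ*)} x_t − ∑_{t ∈ I⁻(θ*)} x_t = ∑_{t ∈ I⁰(θ*)} λ_t x_t`. -/
theorem stmt2 (n N : ℕ) (hn : 1 ≤ n) (hN : 1 ≤ N)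
    (x : Fin N → Fin n → ℝ) (y : Fin N → ℝ) (θs : Fin n → ℝ) :
    (∀ θ : Fin n → ℝ, ∑ t, |y t - x t ⬝ᵥ θs| ≤ ∑ t, |y t - x t ⬝ᵥ θ|) ↔
      (∃ lam : Fin N → ℝ,
        (∀ t ∈ univ.filter (fun t => x t ⬝ᵥ θs = y t), lam t ∈ Set.Icc (-1 : ℝ) 1) ∧
        (∑ t ∈ univ.filter (fun t => x t ⬝ᵥ θs > y t), x t)
          - (∑ t ∈ univ.filter (fun t => x t ⬝ᵥ θs < y t), x t)
          = ∑ t ∈ univ.filter (fun t => x t ⬝ᵥ θs = y t), lam t • x t) :=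
  stmt2_general n N x y θs
end

section
/- A vector θ* ∈ ℝ^n solves the ℓ1 problem (i.e., ‖φ(θ*)‖₁ ≤ ‖φ(θ)‖₁ for all θ ∈ ℝ^n) if and only if for every η ∈ ℝ^n, |Σ_{t ∈ I⁺(θ*)} ⟨η, x_t⟩ − Σ_{t ∈ I⁻(θ*)} ⟨η, x_t⟩| ≤ Σ_{t ∈ I⁰(θ*)} |⟨η, x_t⟩| (with the convention that an empty sum equals zero). -/
/-!
Write `z t = ⟨x_t, θ*⟩ - y_t` and `a t = ⟨η, x_t⟩`, so that along the ray `θ* + s η` the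
objective is `s ↦ ∑ |z t + s a t|`. Being convex, it lies above its tangent line at `s = 0`,
and it agrees with that line for small `s ≥ 0`, before any nonzero residual changes sign.
So `θ*` is optimal iff the right derivative `∑_{I⁺} a t - ∑_{I⁻} a t + ∑_{I⁰} |a t|` is
nonnegative for every `η`; replacing `η` by `-η` flips the sign of the first two sums and
fixes the third, which gives the absolute-value form.
-/

open Matrix Finset Filter Topology

/-- The right derivative at `0` of `s ↦ |z + s * a|`. -/
noncomputable def absRightDeriv (z a : ℝ) : ℝ :=
  if z = 0 then |a| else if 0 < z then a else -a

lemma abs_add_absRightDeriv_le (z a : ℝ) : |z| + absRightDeriv z a ≤ |z + a| := by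
  unfold absRightDeriv
  split_ifs with h0 hpos
  · simp [h0]
  · rw [abs_of_pos hpos]
    linarith [le_abs_self (z + a)]
  · rw [abs_of_neg (lt_of_le_of_ne (not_lt.mp hpos) h0)]
    linarith [neg_abs_le (z + a)]

lemma abs_add_eq_abs_add_absRightDeriv {z a : ℝ} (h : z ≠ 0 → |a| ≤ |z|) :
    |z + a| = |z| + absRightDeriv z a := by
  unfold absRightDeriv
  split_ifs with h0 hpos
  · simp [h0]
  · have hbound := abs_le.mp ((h h0).trans_eq (abs_of_pos hpos))
    rw [abs_of_pos hpos, abs_of_nonneg (by linarith)]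
  · have hneg : z < 0 := lt_of_le_of_ne (not_lt.mp hpos) h0
    have hbound := abs_le.mp ((h h0).trans_eq (abs_of_neg hneg))
    rw [abs_of_neg hneg, abs_of_nonpos (by linarith)]
    ring

lemma absRightDeriv_mul_left (z a : ℝ) {s : ℝ} (hs : 0 ≤ s) :
    absRightDeriv z (s * a) = s * absRightDeriv z a := by
  unfold absRightDeriv
  split_ifs <;> simp [abs_mul, abs_of_nonneg hs]

section Sums

variable {ι : Type*} [Fintype ι]

lemma sum_abs_add_absRightDeriv_le (z a : ι → ℝ) :
    ∑ i, |z i| + ∑ i, absRightDeriv (z i) (a i) ≤ ∑ i, |z i + a i| := by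
  rw [← sum_add_distrib]
  exact sum_le_sum fun i _ => abs_add_absRightDeriv_le (z i) (a i)

lemma eventually_sum_abs_add_mul_eq (z a : ι → ℝ) :
    ∀ᶠ s in 𝓝[≥] 0, ∑ i, |z i + s * a i| =
      ∑ i, |z i| + s * ∑ i, absRightDeriv (z i) (a i) := by
  have hsmall : ∀ i, ∀ᶠ s in 𝓝 (0 : ℝ), z i ≠ 0 → |s * a i| ≤ |z i| := by
    intro i
    by_cases hz : z i = 0
    · exact .of_forall fun _ h => absurd hz h
    · have hlim : Tendsto (fun s : ℝ => |s * a i|) (𝓝 0) (𝓝 0) := by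
        simpa using ((continuous_id.mul continuous_const).abs.tendsto (0 : ℝ))
      filter_upwards [hlim.eventually (ge_mem_nhds (abs_pos.mpr hz))] with s hs _ using hs
  filter_upwards [nhdsWithin_le_nhds (eventually_all.mpr hsmall), self_mem_nhdsWithin]
    with s hs hs0
  rw [mul_sum, ← sum_add_distrib]
  refine sum_congr rfl fun i _ => ?_
  rw [abs_add_eq_abs_add_absRightDeriv (hs i), absRightDeriv_mul_left _ _ hs0]

lemma sum_abs_le_sum_abs_add_mul_iff (z a : ι → ℝ) :
    (∀ s, 0 ≤ s → ∑ i, |z i| ≤ ∑ i, |z i + s * a i|) ↔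
      0 ≤ ∑ i, absRightDeriv (z i) (a i) := by
  constructor
  · intro h
    obtain ⟨s, hlin, hs⟩ :=
      ((eventually_sum_abs_add_mul_eq z a).filter_mono
        (nhdsWithin_mono _ Set.Ioi_subset_Ici_self)).and self_mem_nhdsWithin |>.exists
    have hle := h s hs.le
    rw [hlin] at hle
    exact nonneg_of_mul_nonneg_right (by linarith) hs
  · intro h s hs
    have hlower := sum_abs_add_absRightDeriv_le z (fun i => s * a i)
    simp only [absRightDeriv_mul_left _ _ hs, ← mul_sum] at hlower
    exact (le_add_of_nonneg_right (mul_nonneg hs h)).trans hlower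

lemma sum_absRightDeriv_sub_eq (p q a : ι → ℝ) :
    ∑ i, absRightDeriv (p i - q i) (a i) =
      (∑ i with q i < p i, a i) - (∑ i with p i < q i, a i) + ∑ i with p i = q i, |a i| := by
  simp only [sum_filter, ← sum_sub_distrib, ← sum_add_distrib]
  refine sum_congr rfl fun i _ => ?_
  unfold absRightDeriv
  rcases lt_trichotomy (p i) (q i) with h | h | h
  · simp [h, h.ne, h.not_gt, sub_eq_zero, sub_pos]
  · simp [h]
  · simp [h, h.ne', h.not_gt, sub_eq_zero, sub_pos]

end Sums

lemma forall_nonneg_add_iff_forall_abs_le {α : Type*} [InvolutiveNeg α] (L Z : α → ℝ)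
    (hL : ∀ v, L (-v) = -L v) (hZ : ∀ v, Z (-v) = Z v) :
    (∀ v, 0 ≤ L v + Z v) ↔ ∀ v, |L v| ≤ Z v := by
  refine ⟨fun h v => abs_le.mpr ⟨?_, ?_⟩, fun h v => ?_⟩
  · linarith [h v]
  · linarith [h (-v), hL v, hZ v]
  · linarith [neg_abs_le (L v), h v]

theorem stmt3_general (n N : ℕ)
    (x : Fin N → Fin n → ℝ) (y : Fin N → ℝ) (θs : Fin n → ℝ) :
    (∀ θ : Fin n → ℝ, ∑ t, |y t - x t ⬝ᵥ θs| ≤ ∑ t, |y t - x t ⬝ᵥ θ|) ↔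
      (∀ η : Fin n → ℝ,
        |(∑ t ∈ univ.filter (fun t => x t ⬝ᵥ θs > y t), η ⬝ᵥ x t)
          - (∑ t ∈ univ.filter (fun t => x t ⬝ᵥ θs < y t), η ⬝ᵥ x t)|
          ≤ ∑ t ∈ univ.filter (fun t => x t ⬝ᵥ θs = y t), |η ⬝ᵥ x t|) := by
  have hray : ∀ η s t, |x t ⬝ᵥ (θs + s • η) - y t| =
      |(x t ⬝ᵥ θs - y t) + s * (η ⬝ᵥ x t)| := by
    intro η s t
    rw [dotProduct_add, dotProduct_smul, dotProduct_comm η, smul_eq_mul]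
    congr 1
    ring
  have hopt : (∀ θ : Fin n → ℝ, ∑ t, |y t - x t ⬝ᵥ θs| ≤ ∑ t, |y t - x t ⬝ᵥ θ|) ↔
      ∀ η : Fin n → ℝ, ∀ s, 0 ≤ s →
        ∑ t, |x t ⬝ᵥ θs - y t| ≤ ∑ t, |(x t ⬝ᵥ θs - y t) + s * (η ⬝ᵥ x t)| := by
    simp only [abs_sub_comm (y _)]
    refine ⟨fun h η s _ => ?_, fun h θ => ?_⟩
    · simpa only [hray] using h (θs + s • η)
    · simpa only [← hray, one_smul, add_sub_cancel] using h (θ - θs) 1 zero_le_one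
  rw [hopt]
  simp only [sum_abs_le_sum_abs_add_mul_iff, sum_absRightDeriv_sub_eq]
  exact forall_nonneg_add_iff_forall_abs_le _ _
    (fun η => by simp only [neg_dotProduct, sum_neg_distrib]; ring)
    (fun η => by simp only [neg_dotProduct, abs_neg])

/-- `θ*` solves the ℓ1 problem iff for every `η ∈ ℝ^n`,
`|∑_{t ∈ I⁺(θ*)} ⟨η,x_t⟩ − ∑_{t ∈ I⁻(θ*)} ⟨η,x_t⟩| ≤ ∑_{t ∈ I⁰(θ*)} |⟨η,x_t⟩|`. -/
theorem stmt3 (n N : ℕ) (hn : 1 ≤ n) (hN : 1 ≤ N)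
    (x : Fin N → Fin n → ℝ) (y : Fin N → ℝ) (θs : Fin n → ℝ) :
    (∀ θ : Fin n → ℝ, ∑ t, |y t - x t ⬝ᵥ θs| ≤ ∑ t, |y t - x t ⬝ᵥ θ|) ↔
      (∀ η : Fin n → ℝ,
        |(∑ t ∈ univ.filter (fun t => x t ⬝ᵥ θs > y t), η ⬝ᵥ x t)
          - (∑ t ∈ univ.filter (fun t => x t ⬝ᵥ θs < y t), η ⬝ᵥ x t)|
          ≤ ∑ t ∈ univ.filter (fun t => x t ⬝ᵥ θs = y t), |η ⬝ᵥ x t|) :=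
  stmt3_general n N x y θs
end

section
/- A vector θ* ∈ ℝ^n is the unique minimizer of the ℓ1 problem (i.e., ‖φ(θ*)‖₁ < ‖φ(θ)‖₁ for all θ ≠ θ*) if and only if there exist real numbers λ_t ∈ [−1, 1], t ∈ I⁰(θ*), such that Σ_{t ∈ I⁺(θ*)} x_t − Σ_{t ∈ I⁻(θ*)} x_t = Σ_{t ∈ I⁰(θ*)} λ_t x_t and rank(X_S) = n, where S = {t ∈ I⁰(θ*) : |λ_t| < 1}. -/
open Matrix Finset

open Filter Topology

/-!
The loss is convex and piecewise linear, so `θ*` is its unique minimizer iff its one-sided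
directional derivative `g d = c ⬝ᵥ d + ∑_{t ∈ I⁰} |x t ⬝ᵥ d|`, where
`c = ∑_{I⁺} x t - ∑_{I⁻} x t`, is positive for every `d ≠ 0`.

If `c = ∑_{I⁰} λ t • x t` with `|λ t| ≤ 1`, then `g d = ∑_{I⁰} (λ t * (x t ⬝ᵥ d) + |x t ⬝ᵥ d|)`
is a sum of nonnegative terms, and a term with `|λ t| < 1` is positive as soon as
`x t ⬝ᵥ d ≠ 0`. Conversely, if `g > 0` off `0`, compactness of the unit sphere gives `η > 0`
with `g d ≥ η * ∑_{I⁰} |x t ⬝ᵥ d|`. These are the support-function inequalities of the zonotope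
`{∑_{I⁰} λ t • x t | |λ t| ≤ 1 - η}`, so by Hahn–Banach `c` lies in it: all multipliers can be
taken in `(-1, 1)`, and then a `d ≠ 0` orthogonal to every `x t`, `t ∈ I⁰`, would give `g d = 0`.
-/

theorem exists_le_mul_of_forall_pos {E : Type*} [NormedAddCommGroup E] [NormedSpace ℝ E]
    [FiniteDimensional ℝ E] {g h : E → ℝ} (hg : Continuous g) (hh : Continuous h)
    (hg_smul : ∀ c : ℝ, 0 < c → ∀ d, g (c • d) = c * g d)
    (hh_smul : ∀ c : ℝ, 0 < c → ∀ d, h (c • d) = c * h d)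
    (hpos : ∀ d ≠ 0, 0 < g d) : ∃ C ≥ 1, ∀ d, h d ≤ C * g d := by
  have hzero {f : E → ℝ} (hf : ∀ c : ℝ, 0 < c → ∀ d, f (c • d) = c * f d) : f 0 = 0 := by
    have h2 := hf 2 two_pos 0
    rw [smul_zero] at h2
    linarith
  have hsphere : ∀ u ∈ Metric.sphere (0 : E) 1, g u ≠ 0 := fun u hu =>
    (hpos u (ne_zero_of_mem_unit_sphere ⟨u, hu⟩)).ne'
  obtain ⟨M, hM⟩ := (isCompact_sphere (0 : E) 1).bddAbove_image
    (hh.continuousOn.div hg.continuousOn hsphere)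
  refine ⟨max M 1, le_max_right _ _, fun d => ?_⟩
  rcases eq_or_ne d 0 with rfl | hd
  · rw [hzero hg_smul, hzero hh_smul, mul_zero]
  have hnorm : 0 < ‖d‖ := norm_pos_iff.mpr hd
  set u := ‖d‖⁻¹ • d
  have hu : u ∈ Metric.sphere (0 : E) 1 := by simp [u, norm_smul, hnorm.ne']
  have hd_eq : d = ‖d‖ • u := by simp [u, smul_smul, hnorm.ne']
  have hratio : h u ≤ max M 1 * g u :=
    (div_le_iff₀ (hpos u (ne_zero_of_mem_unit_sphere ⟨u, hu⟩))).mp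
      ((hM ⟨u, hu, rfl⟩).trans (le_max_left _ _))
  rw [hd_eq, hg_smul _ hnorm, hh_smul _ hnorm, mul_left_comm]
  exact mul_le_mul_of_nonneg_left hratio hnorm.le

section Zonotope

variable {m ι : Type*} [Fintype m] (c : m → ℝ) (s : Finset ι) (v : ι → m → ℝ)

theorem exists_eq_sum_smul_of_dotProduct_le {r : ℝ} (hr : 0 ≤ r)
    (h : ∀ d, c ⬝ᵥ d ≤ r * ∑ t ∈ s, |v t ⬝ᵥ d|) :
    ∃ μ : ι → ℝ, (∀ t, |μ t| ≤ r) ∧ c = ∑ t ∈ s, μ t • v t := by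
  classical
  set L : (ι → ℝ) →ₗ[ℝ] m → ℝ :=
    { toFun := fun μ => ∑ t ∈ s, μ t • v t
      map_add' := fun μ ν => by simp only [Pi.add_apply, add_smul, sum_add_distrib]
      map_smul' := fun a μ => by
        simp only [Pi.smul_apply, smul_eq_mul, mul_smul, smul_sum, RingHom.id_apply] }
  set cube : Set (ι → ℝ) := Set.univ.pi fun _ => Set.Icc (-r) r
  by_contra hc
  have hZ : c ∉ L '' cube := by
    rintro ⟨μ, hμ, rfl⟩
    exact hc ⟨μ, fun t => abs_le.mpr (hμ t trivial), rfl⟩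
  have hcompact : IsCompact (L '' cube) :=
    (isCompact_univ_pi fun _ => isCompact_Icc).image
      (show Continuous fun μ : ι → ℝ => ∑ t ∈ s, μ t • v t by fun_prop)
  obtain ⟨f, u, hfZ, hfc⟩ := geometric_hahn_banach_closed_point
    ((convex_pi fun _ _ => convex_Icc (-r) r).linear_image L) hcompact.isClosed hZ
  set w : m → ℝ := fun i => f (Pi.single i 1)
  have hf : ∀ z, f z = z ⬝ᵥ w := fun z => by
    conv_lhs => rw [pi_eq_sum_univ' z]
    simp [w, dotProduct]
  set μ : ι → ℝ := fun t => if 0 ≤ v t ⬝ᵥ w then r else -r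
  have hμ : μ ∈ cube := fun t _ => by
    by_cases ht : 0 ≤ v t ⬝ᵥ w <;> simp [μ, ht, hr]
  have hLμ : L μ ⬝ᵥ w = r * ∑ t ∈ s, |v t ⬝ᵥ w| := by
    simp only [L, LinearMap.coe_mk, AddHom.coe_mk, sum_dotProduct, smul_dotProduct, smul_eq_mul,
      mul_sum]
    refine sum_congr rfl fun t _ => ?_
    by_cases ht : 0 ≤ v t ⬝ᵥ w
    · simp [μ, ht, abs_of_nonneg ht]
    · simp [μ, ht, abs_of_neg (not_le.mp ht)]
  have hμZ := hfZ _ ⟨μ, hμ, rfl⟩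
  rw [hf, hLμ] at hμZ
  rw [hf] at hfc
  linarith [h w]

theorem dotProduct_add_sum_abs_eq_sum {μ : ι → ℝ} (hc : c = ∑ t ∈ s, μ t • v t) (d : m → ℝ) :
    c ⬝ᵥ d + ∑ t ∈ s, |v t ⬝ᵥ d| = ∑ t ∈ s, (μ t * (v t ⬝ᵥ d) + |v t ⬝ᵥ d|) := by
  simp only [hc, sum_dotProduct, smul_dotProduct, smul_eq_mul, sum_add_distrib]

theorem exists_of_dotProduct_add_sum_abs_pos
    (h : ∀ d ≠ 0, 0 < c ⬝ᵥ d + ∑ t ∈ s, |v t ⬝ᵥ d|) :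
    ∃ μ : ι → ℝ, (∀ t, |μ t| < 1) ∧ c = ∑ t ∈ s, μ t • v t ∧
      ∀ d, (∀ t ∈ s, v t ⬝ᵥ d = 0) → d = 0 := by
  have hhom : ∀ a : ℝ, 0 < a → ∀ d, ∑ t ∈ s, |v t ⬝ᵥ a • d| = a * ∑ t ∈ s, |v t ⬝ᵥ d| :=
    fun a ha d => by simp [dotProduct_smul, abs_mul, abs_of_pos ha, mul_sum]
  obtain ⟨C, hC1, hC⟩ := exists_le_mul_of_forall_pos
    (g := fun d => c ⬝ᵥ d + ∑ t ∈ s, |v t ⬝ᵥ d|) (h := fun d => ∑ t ∈ s, |v t ⬝ᵥ d|)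
    (by fun_prop) (by fun_prop)
    (fun a ha d => by rw [hhom a ha, dotProduct_smul, smul_eq_mul, mul_add]) hhom h
  have hCpos : 0 < C := one_pos.trans_le hC1
  have hsupp : ∀ d, c ⬝ᵥ d ≤ (1 - C⁻¹) * ∑ t ∈ s, |v t ⬝ᵥ d| := fun d => by
    have hCd := hC (-d)
    simp only [dotProduct_neg, abs_neg] at hCd
    rw [sub_mul, one_mul, inv_mul_eq_div, le_sub_iff_add_le, ← le_sub_iff_add_le',
      div_le_iff₀ hCpos]
    linarith
  obtain ⟨μ, hμ, hc⟩ := exists_eq_sum_smul_of_dotProduct_le c s v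
    (sub_nonneg.mpr (inv_le_one_of_one_le₀ hC1)) hsupp
  refine ⟨μ, fun t => (hμ t).trans_lt (sub_lt_self 1 (inv_pos.mpr hCpos)), hc, fun d hd => ?_⟩
  by_contra hne
  have hpos := h d hne
  rw [dotProduct_add_sum_abs_eq_sum c s v hc, sum_eq_zero fun t ht => by simp [hd t ht]] at hpos
  exact hpos.false

theorem dotProduct_add_sum_abs_pos {μ : ι → ℝ} (hμ : ∀ t ∈ s, |μ t| ≤ 1)
    (hc : c = ∑ t ∈ s, μ t • v t)
    (hS : ∀ d, (∀ t ∈ s.filter (fun t => |μ t| < 1), v t ⬝ᵥ d = 0) → d = 0)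
    {d : m → ℝ} (hd : d ≠ 0) : 0 < c ⬝ᵥ d + ∑ t ∈ s, |v t ⬝ᵥ d| := by
  obtain ⟨t₀, ht₀, hvt₀⟩ : ∃ t ∈ s.filter (fun t => |μ t| < 1), v t ⬝ᵥ d ≠ 0 := by
    by_contra! h
    exact hd (hS d h)
  rw [mem_filter] at ht₀
  rw [dotProduct_add_sum_abs_eq_sum c s v hc]
  refine sum_pos' (fun t ht => ?_) ⟨t₀, ht₀.1, ?_⟩
  · have h1 : |μ t| * |v t ⬝ᵥ d| ≤ |v t ⬝ᵥ d| := mul_le_of_le_one_left (abs_nonneg _) (hμ t ht)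
    have h2 := neg_abs_le (μ t * (v t ⬝ᵥ d))
    rw [abs_mul] at h2
    linarith
  · have h1 : |μ t₀| * |v t₀ ⬝ᵥ d| < |v t₀ ⬝ᵥ d| :=
      mul_lt_of_lt_one_left (abs_pos.mpr hvt₀) ht₀.2
    have h2 := neg_abs_le (μ t₀ * (v t₀ ⬝ᵥ d))
    rw [abs_mul] at h2
    linarith

theorem forall_dotProduct_add_sum_abs_pos_iff :
    (∀ d ≠ 0, 0 < c ⬝ᵥ d + ∑ t ∈ s, |v t ⬝ᵥ d|) ↔
      ∃ μ : ι → ℝ, (∀ t ∈ s, |μ t| ≤ 1) ∧ c = ∑ t ∈ s, μ t • v t ∧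
        ∀ d, (∀ t ∈ s.filter (fun t => |μ t| < 1), v t ⬝ᵥ d = 0) → d = 0 := by
  constructor
  · intro h
    obtain ⟨μ, hμ, hc, hS⟩ := exists_of_dotProduct_add_sum_abs_pos c s v h
    exact ⟨μ, fun t _ => (hμ t).le, hc, by rwa [filter_true_of_mem fun t _ => hμ t]⟩
  · rintro ⟨μ, hμ, hc, hS⟩ d hd
    exact dotProduct_add_sum_abs_pos c s v hμ hc hS hd

end Zonotope

/-- The right derivative at `ε = 0` of `ε ↦ |q - (p + ε * a)|`. -/
noncomputable def absSubDeriv (p q a : ℝ) : ℝ := if p = q then |a| else if p > q then a else -a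

theorem abs_sub_add_absSubDeriv_le (p q a : ℝ) : |q - p| + absSubDeriv p q a ≤ |q - (p + a)| := by
  unfold absSubDeriv
  rcases lt_trichotomy p q with hpq | rfl | hpq
  · rw [if_neg hpq.ne, if_neg (not_lt.mpr hpq.le), abs_of_pos (sub_pos.mpr hpq)]
    linarith [le_abs_self (q - (p + a))]
  · simp
  · rw [if_neg hpq.ne', if_pos hpq, abs_of_neg (sub_neg.mpr hpq)]
    linarith [neg_abs_le (q - (p + a))]

theorem eventually_abs_sub_add_mul_eq (p q a : ℝ) :
    ∀ᶠ ε in 𝓝[>] (0 : ℝ), |q - (p + ε * a)| = |q - p| + ε * absSubDeriv p q a := by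
  have hcont : Continuous fun ε : ℝ => q - (p + ε * a) := by fun_prop
  have hlim : Tendsto (fun ε : ℝ => q - (p + ε * a)) (𝓝[>] 0) (𝓝 (q - p)) := by
    simpa using (hcont.tendsto 0).mono_left nhdsWithin_le_nhds
  unfold absSubDeriv
  rcases lt_trichotomy p q with hpq | rfl | hpq
  · filter_upwards [hlim.eventually_const_lt (sub_pos.mpr hpq)] with ε hε
    rw [if_neg hpq.ne, if_neg (not_lt.mpr hpq.le), abs_of_pos hε, abs_of_pos (sub_pos.mpr hpq)]
    ring
  · filter_upwards [self_mem_nhdsWithin] with ε (hε : 0 < ε)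
    simp [abs_mul, abs_of_pos hε]
  · filter_upwards [hlim.eventually_lt_const (sub_neg.mpr hpq)] with ε hε
    rw [if_neg hpq.ne', if_pos hpq, abs_of_neg hε, abs_of_neg (sub_neg.mpr hpq)]
    ring

section L1

variable {m ι : Type*} [Fintype m] [Fintype ι] (x : ι → m → ℝ) (y : ι → ℝ)

noncomputable def l1Loss (θ : m → ℝ) : ℝ := ∑ t, |y t - x t ⬝ᵥ θ|

/-- The gradient at `θ` of the terms of `l1Loss` with nonzero residual. -/
noncomputable def l1Grad (θ : m → ℝ) : m → ℝ :=
  ∑ t ∈ univ.filter (fun t => x t ⬝ᵥ θ > y t), x t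
    - ∑ t ∈ univ.filter (fun t => x t ⬝ᵥ θ < y t), x t

noncomputable def l1DirDeriv (θ d : m → ℝ) : ℝ :=
  l1Grad x y θ ⬝ᵥ d + ∑ t ∈ univ.filter (fun t => x t ⬝ᵥ θ = y t), |x t ⬝ᵥ d|

theorem l1DirDeriv_eq_sum (θ d : m → ℝ) :
    l1DirDeriv x y θ d = ∑ t, absSubDeriv (x t ⬝ᵥ θ) (y t) (x t ⬝ᵥ d) := by
  simp only [l1DirDeriv, l1Grad, sub_dotProduct, sum_dotProduct]
  simp only [sum_filter]
  rw [← sum_sub_distrib, ← sum_add_distrib]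
  refine sum_congr rfl fun t _ => ?_
  unfold absSubDeriv
  grind

theorem l1Loss_add_l1DirDeriv_le (θ θ' : m → ℝ) :
    l1Loss x y θ + l1DirDeriv x y θ (θ' - θ) ≤ l1Loss x y θ' := by
  rw [l1DirDeriv_eq_sum, l1Loss, l1Loss, ← sum_add_distrib]
  gcongr with t
  simpa [dotProduct_sub] using abs_sub_add_absSubDeriv_le (x t ⬝ᵥ θ) (y t) (x t ⬝ᵥ (θ' - θ))

theorem eventually_l1Loss_add_smul (θ d : m → ℝ) :
    ∀ᶠ ε in 𝓝[>] (0 : ℝ), l1Loss x y (θ + ε • d) = l1Loss x y θ + ε * l1DirDeriv x y θ d := by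
  filter_upwards [eventually_all.mpr fun t =>
    eventually_abs_sub_add_mul_eq (x t ⬝ᵥ θ) (y t) (x t ⬝ᵥ d)] with ε hε
  simp only [l1Loss, l1DirDeriv_eq_sum, dotProduct_add, dotProduct_smul, smul_eq_mul, mul_sum,
    ← sum_add_distrib, hε]

theorem isUniqueMin_l1Loss_iff (θ : m → ℝ) :
    (∀ θ' ≠ θ, l1Loss x y θ < l1Loss x y θ') ↔ ∀ d ≠ 0, 0 < l1DirDeriv x y θ d := by
  constructor
  · intro h d hd
    obtain ⟨ε, hε, hεpos⟩ :=
      ((eventually_l1Loss_add_smul x y θ d).and self_mem_nhdsWithin).exists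
    have hlt := h (θ + ε • d) (by simpa [(hεpos : 0 < ε).ne'] using hd)
    rw [hε] at hlt
    exact pos_of_mul_pos_right (by linarith) hεpos.le
  · intro h θ' hθ'
    linarith [l1Loss_add_l1DirDeriv_le x y θ θ', h (θ' - θ) (sub_ne_zero.mpr hθ')]

end L1

theorem rank_colSub_eq_iff (n N : ℕ) (x : Fin N → Fin n → ℝ) (S : Finset (Fin N)) :
    (colSub n N x S).rank = n ↔ ∀ d, (∀ t ∈ S, x t ⬝ᵥ d = 0) → d = 0 := by
  have hmulVec (d : Fin n → ℝ) : (colSub n N x S)ᵀ *ᵥ d = 0 ↔ ∀ t ∈ S, x t ⬝ᵥ d = 0 := by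
    simp [funext_iff, mulVec, colSub, dotProduct]
  have hker := LinearMap.finrank_range_add_finrank_ker (colSub n N x S)ᵀ.mulVecLin
  rw [Module.finrank_fin_fun] at hker
  simp_rw [← hmulVec, ← ker_mulVecLin_eq_bot_iff, ← Submodule.finrank_eq_zero]
  rw [← rank_transpose, Matrix.rank]
  omega

theorem stmt4_general (n N : ℕ)
    (x : Fin N → Fin n → ℝ) (y : Fin N → ℝ) (θs : Fin n → ℝ) :
    (∀ θ : Fin n → ℝ, θ ≠ θs → ∑ t, |y t - x t ⬝ᵥ θs| < ∑ t, |y t - x t ⬝ᵥ θ|) ↔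
      (∃ lam : Fin N → ℝ,
        (∀ t ∈ univ.filter (fun t => x t ⬝ᵥ θs = y t), lam t ∈ Set.Icc (-1 : ℝ) 1) ∧
        (∑ t ∈ univ.filter (fun t => x t ⬝ᵥ θs > y t), x t)
          - (∑ t ∈ univ.filter (fun t => x t ⬝ᵥ θs < y t), x t)
          = (∑ t ∈ univ.filter (fun t => x t ⬝ᵥ θs = y t), lam t • x t) ∧
        (colSub n N x
          ((univ.filter (fun t => x t ⬝ᵥ θs = y t)).filter (fun t => |lam t| < 1))).rank
          = n) := by
  refine (isUniqueMin_l1Loss_iff x y θs).trans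
    ((forall_dotProduct_add_sum_abs_pos_iff _ _ x).trans (exists_congr fun lam => ?_))
  exact and_congr (forall₂_congr fun t _ => abs_le.trans Set.mem_Icc.symm)
    (and_congr Iff.rfl (rank_colSub_eq_iff n N x _).symm)

/-- `θ*` is the unique minimizer of the ℓ1 problem iff there exist
numbers `λ_t ∈ [-1,1]`, `t ∈ I⁰(θ*)`, satisfying the subgradient equality, and
`rank(X_S) = n` with `S = {t ∈ I⁰(θ*) : |λ_t| < 1}`. -/
theorem stmt4 (n N : ℕ) (hn : 1 ≤ n) (hN : 1 ≤ N)
    (x : Fin N → Fin n → ℝ) (y : Fin N → ℝ) (θs : Fin n → ℝ) :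
    (∀ θ : Fin n → ℝ, θ ≠ θs → ∑ t, |y t - x t ⬝ᵥ θs| < ∑ t, |y t - x t ⬝ᵥ θ|) ↔
      (∃ lam : Fin N → ℝ,
        (∀ t ∈ univ.filter (fun t => x t ⬝ᵥ θs = y t), lam t ∈ Set.Icc (-1 : ℝ) 1) ∧
        (∑ t ∈ univ.filter (fun t => x t ⬝ᵥ θs > y t), x t)
          - (∑ t ∈ univ.filter (fun t => x t ⬝ᵥ θs < y t), x t)
          = (∑ t ∈ univ.filter (fun t => x t ⬝ᵥ θs = y t), lam t • x t) ∧
        (colSub n N x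
          ((univ.filter (fun t => x t ⬝ᵥ θs = y t)).filter (fun t => |lam t| < 1))).rank
          = n) :=
  stmt4_general n N x y θs
end

section
/- Suppose the model is affine, i.e., each regressor has the form x_t = (x̃_t, 1) ∈ ℝ^n with x̃_t ∈ ℝ^{n−1} (its last coordinate equals 1). If θ* ∈ ℝ^n solves the ℓ1 problem (i.e., ‖φ(θ*)‖₁ ≤ ‖φ(θ)‖₁ for all θ ∈ ℝ^n), then | |I⁺(θ*)| − |I⁻(θ*)| | ≤ |I⁰(θ*)|, where |·| applied to the sets denotes cardinality. -/
open Matrix Finset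

lemma key_aux (N : ℕ) (φ : Fin N → ℝ) (ε : ℝ) (hε : 0 < ε)
    (hsmall : ∀ t, φ t ≠ 0 → ε ≤ |φ t|)
    (hineq : ∑ t, |φ t| ≤ ∑ t, |φ t - ε|) :
    ((univ.filter (fun t => 0 < φ t)).card : ℝ)
      ≤ ((univ.filter (fun t => ¬ 0 < φ t)).card : ℝ) := by
  have hpt : ∀ t : Fin N, |φ t - ε| - |φ t| = if 0 < φ t then -ε else ε := by
    intro t
    by_cases h : 0 < φ t
    · have h1 : ε ≤ φ t := by
        have := hsmall t (ne_of_gt h)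
        rwa [abs_of_pos h] at this
      rw [if_pos h, abs_of_pos h, abs_of_nonneg (by linarith)]
      ring
    · push_neg at h
      rw [if_neg (not_lt.mpr h), abs_of_nonpos h, abs_of_nonpos (by linarith)]
      ring
  have hsum : (0:ℝ) ≤ ∑ t, (if 0 < φ t then -ε else ε) := by
    calc (0:ℝ) ≤ ∑ t, |φ t - ε| - ∑ t, |φ t| := by linarith
    _ = ∑ t, (|φ t - ε| - |φ t|) := by rw [Finset.sum_sub_distrib]
    _ = ∑ t, (if 0 < φ t then -ε else ε) := Finset.sum_congr rfl (fun t _ => hpt t)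
  rw [Finset.sum_ite, Finset.sum_const, Finset.sum_const] at hsum
  simp only [nsmul_eq_mul] at hsum
  nlinarith [hsum]

/-- In the affine case (the last coordinate of every regressor
equals 1), a necessary condition for `θ*` to solve the ℓ1 problem is
`| |I⁺(θ*)| − |I⁻(θ*)| | ≤ |I⁰(θ*)|`. -/
theorem stmt6 (n N : ℕ) (hn : 2 ≤ n) (hN : 1 ≤ N)
    (x : Fin N → Fin n → ℝ) (y : Fin N → ℝ)
    (haff : ∀ t, x t ⟨n - 1, by omega⟩ = 1)
    (θs : Fin n → ℝ)
    (hsol : ∀ θ : Fin n → ℝ, ∑ t, |y t - x t ⬝ᵥ θs| ≤ ∑ t, |y t - x t ⬝ᵥ θ|) :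
    |((univ.filter (fun t => x t ⬝ᵥ θs > y t)).card : ℤ)
      - ((univ.filter (fun t => x t ⬝ᵥ θs < y t)).card : ℤ)|
      ≤ ((univ.filter (fun t => x t ⬝ᵥ θs = y t)).card : ℤ) := by
  set φ : Fin N → ℝ := fun t => y t - x t ⬝ᵥ θs with hφ
  set e : Fin n → ℝ := Pi.single ⟨n - 1, by omega⟩ 1 with he
  have hdot : ∀ t (c : ℝ), x t ⬝ᵥ (θs + c • e) = x t ⬝ᵥ θs + c := by
    intro t c
    rw [dotProduct_add, dotProduct_smul, he, dotProduct_single, haff t]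
    simp
  by_cases hS : ∃ t, φ t ≠ 0
  · obtain ⟨t0, ht0⟩ := hS
    set S : Finset (Fin N) := univ.filter (fun t => φ t ≠ 0) with hSdef
    have hSne : S.Nonempty := ⟨t0, by simp [hSdef, ht0]⟩
    set T := S.image (fun t => |φ t|) with hT
    have hTne : T.Nonempty := hSne.image _
    set ε := T.min' hTne with hε
    obtain ⟨t1, ht1, heq1⟩ := Finset.mem_image.mp (T.min'_mem hTne)
    have ht1' := (Finset.mem_filter.mp ht1).2
    have hεpos : 0 < ε := by
      rw [hε, ← heq1]; exact abs_pos.mpr ht1'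
    have hsmall : ∀ t, φ t ≠ 0 → ε ≤ |φ t| := by
      intro t ht
      exact Finset.min'_le _ _ (Finset.mem_image.mpr
        ⟨t, Finset.mem_filter.mpr ⟨Finset.mem_univ t, ht⟩, rfl⟩)
    set ψ : Fin N → ℝ := fun t => -φ t with hψ
    have h1 : ∑ t, |φ t| ≤ ∑ t, |φ t - ε| := by
      calc ∑ t, |φ t| ≤ ∑ t, |y t - x t ⬝ᵥ (θs + ε • e)| := hsol _
      _ = ∑ t, |φ t - ε| := by
          apply Finset.sum_congr rfl; intro t _; rw [hdot t ε, hφ]; ring_nf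
    have h2 : ∑ t, |ψ t| ≤ ∑ t, |ψ t - ε| := by
      calc ∑ t, |ψ t| = ∑ t, |φ t| := by
            apply Finset.sum_congr rfl; intro t _; rw [hψ]; exact abs_neg _
      _ ≤ ∑ t, |y t - x t ⬝ᵥ (θs + (-ε) • e)| := hsol _
      _ = ∑ t, |ψ t - ε| := by
          apply Finset.sum_congr rfl; intro t _
          rw [hdot t (-ε)]
          simp only [hψ, hφ]
          rw [show y t - (x t ⬝ᵥ θs + -ε) = -(-(y t - x t ⬝ᵥ θs) - ε) by ring, abs_neg]
    have hsmall2 : ∀ t, ψ t ≠ 0 → ε ≤ |ψ t| := by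
      intro t ht
      rw [hψ, abs_neg]
      exact hsmall t (by simpa [hψ] using ht)
    have k1 := key_aux N φ ε hεpos hsmall h1
    have k2 := key_aux N ψ ε hεpos hsmall2 h2
    have e1 : (univ.filter (fun t => 0 < φ t)) = (univ.filter (fun t => x t ⬝ᵥ θs < y t)) := by
      apply Finset.filter_congr; intro t _; simp only [hφ]; exact sub_pos
    have e2 : (univ.filter (fun t => 0 < ψ t)) = (univ.filter (fun t => x t ⬝ᵥ θs > y t)) := by
      apply Finset.filter_congr; intro t _; simp only [hψ, hφ]
      rw [neg_sub, sub_pos]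
    have e3 : (univ.filter (fun t => ¬ 0 < φ t)).card
        = (univ.filter (fun t => x t ⬝ᵥ θs > y t)).card
          + (univ.filter (fun t => x t ⬝ᵥ θs = y t)).card := by
      rw [← Finset.card_union_of_disjoint]
      · congr 1
        ext t
        simp only [Finset.mem_filter, Finset.mem_union, Finset.mem_univ, true_and, hφ]
        constructor
        · intro h; rcases lt_trichotomy (x t ⬝ᵥ θs) (y t) with h'|h'|h'
          · exfalso; exact h (by linarith)
          · right; exact h'
          · left; exact h'
        · intro h; rcases h with h|h <;> push_neg <;> linarith [h]
      · rw [Finset.disjoint_filter]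
        intro t _ h h'
        rw [h'] at h; exact lt_irrefl _ h
    have e4 : (univ.filter (fun t => ¬ 0 < ψ t)).card
        = (univ.filter (fun t => x t ⬝ᵥ θs < y t)).card
          + (univ.filter (fun t => x t ⬝ᵥ θs = y t)).card := by
      rw [← Finset.card_union_of_disjoint]
      · congr 1
        ext t
        simp only [Finset.mem_filter, Finset.mem_union, Finset.mem_univ, true_and, hψ, hφ]
        constructor
        · intro h; rcases lt_trichotomy (x t ⬝ᵥ θs) (y t) with h'|h'|h'
          · left; exact h'
          · right; exact h'
          · exfalso; exact h (by linarith)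
        · intro h; rcases h with h|h <;> push_neg <;> linarith [h]
      · rw [Finset.disjoint_filter]
        intro t _ h h'
        rw [h'] at h; exact lt_irrefl _ h
    rw [e1, e3] at k1; rw [e2, e4] at k2
    have kn1 : (univ.filter (fun t => x t ⬝ᵥ θs < y t)).card
        ≤ (univ.filter (fun t => x t ⬝ᵥ θs > y t)).card
          + (univ.filter (fun t => x t ⬝ᵥ θs = y t)).card := by exact_mod_cast k1
    have kn2 : (univ.filter (fun t => x t ⬝ᵥ θs > y t)).card
        ≤ (univ.filter (fun t => x t ⬝ᵥ θs < y t)).card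
          + (univ.filter (fun t => x t ⬝ᵥ θs = y t)).card := by exact_mod_cast k2
    rw [abs_le]
    omega
  · push_neg at hS
    have e0 : (univ.filter (fun t => x t ⬝ᵥ θs > y t)) = ∅ := by
      apply Finset.filter_eq_empty_iff.mpr
      intro t _
      have := hS t
      rw [hφ] at this
      simp only [sub_eq_zero] at this
      simp [this]
    have e0' : (univ.filter (fun t => x t ⬝ᵥ θs < y t)) = ∅ := by
      apply Finset.filter_eq_empty_iff.mpr
      intro t _
      have := hS t
      rw [hφ] at this
      simp only [sub_eq_zero] at this
      simp [this]
    rw [e0, e0']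
    simp
end

section
/- Suppose rank(X) = n. Let θ ∈ ℝ^n and set I = I⁰(θ) and I^c = 𝕀 \ I. If ‖X_{I^c}^⊤ (X X^⊤)^{−1} X‖₁ ≤ 1/2, then θ solves the ℓ1 problem, i.e., ‖φ(θ)‖₁ ≤ ‖φ(θ')‖₁ for all θ' ∈ ℝ^n. -/
open Matrix Finset

/-- The Gram matrix `X X^⊤` of the regressor matrix `X`. -/
noncomputable def gramX (n N : ℕ) (x : Fin N → Fin n → ℝ) :
    Matrix (Fin n) (Fin n) ℝ :=
  Matrix.of fun i j => ∑ t, x t i * x t j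

/-! Write `θ' = θ + δ` and `u_t = ⟨x_t, δ⟩`. The hat matrix `Xᵀ (X Xᵀ)⁻¹ X` fixes `u`, so the
column bound gives `∑_{t ∉ I} |u_t| ≤ ‖u‖₁ / 2`: at least half of the mass of `u` lies on `I`,
where `φ(θ)` vanishes. On `I` the residual `φ(θ')_t = -u_t` gains `|u_t|`, off `I` it loses at
most `|u_t|`, hence `‖φ(θ')‖₁ ≥ ‖φ(θ)‖₁`. -/

theorem Matrix.isUnit_of_rank_eq_card {m K : Type*} [Fintype m] [DecidableEq m] [Field K]
    {A : Matrix m m K} (hA : A.rank = Fintype.card m) : IsUnit A := by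
  rw [← mulVec_surjective_iff_isUnit, ← Matrix.coe_mulVecLin, ← LinearMap.range_eq_top]
  exact Submodule.eq_top_of_finrank_eq (by rwa [Module.finrank_fintype_fun_eq_card])

section AbsSum

variable {ι : Type*} [Fintype ι]

theorem sum_abs_le_mul_sum_abs_of_eq_sum_mul (S : Finset ι) {c : ℝ} {u : ι → ℝ}
    {K : ι → ι → ℝ} (hu : ∀ s ∈ S, u s = ∑ t, u t * K s t)
    (hK : ∀ t, ∑ s ∈ S, |K s t| ≤ c) :
    ∑ s ∈ S, |u s| ≤ c * ∑ t, |u t| :=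
  calc ∑ s ∈ S, |u s| ≤ ∑ s ∈ S, ∑ t, |u t| * |K s t| := by
        gcongr with s hs
        rw [hu s hs]
        exact (abs_sum_le_sum_abs _ _).trans_eq (by simp only [abs_mul])
    _ = ∑ t, |u t| * ∑ s ∈ S, |K s t| := by
        rw [sum_comm]; simp only [mul_sum]
    _ ≤ ∑ t, |u t| * c := by gcongr with t; exact hK t
    _ = c * ∑ t, |u t| := by rw [← sum_mul, mul_comm]

/-- The null space property of `ℓ1` minimization. -/
theorem sum_abs_le_sum_abs_sub [DecidableEq ι] (I : Finset ι) {φ u : ι → ℝ}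
    (hφ : ∀ t ∈ I, φ t = 0)
    (hu : ∑ t ∈ Iᶜ, |u t| ≤ 1 / 2 * ∑ t, |u t|) :
    ∑ t, |φ t| ≤ ∑ t, |φ t - u t| := by
  have hφu : ∑ t ∈ I, |φ t - u t| = ∑ t ∈ I, |u t| :=
    sum_congr rfl fun t ht => by rw [hφ t ht, zero_sub, abs_neg]
  have hoff : ∑ t ∈ Iᶜ, (|φ t| - |u t|) ≤ ∑ t ∈ Iᶜ, |φ t - u t| :=
    sum_le_sum fun t _ => abs_sub_abs_le_abs_sub _ _
  rw [sum_sub_distrib] at hoff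
  rw [← sum_add_sum_compl I] at hu ⊢
  rw [← sum_add_sum_compl I, hφu, sum_eq_zero fun t ht => by rw [hφ t ht, abs_zero]]
  linarith

end AbsSum

section Gram

variable {n N : ℕ} (x : Fin N → Fin n → ℝ)

theorem gramX_eq_mul_transpose :
    gramX n N x = (of fun i t => x t i : Matrix (Fin n) (Fin N) ℝ) *
      (of fun i t => x t i : Matrix (Fin n) (Fin N) ℝ)ᵀ := by
  ext i j
  simp [gramX, mul_apply]

theorem isUnit_gramX (hrank : (of fun i t => x t i : Matrix (Fin n) (Fin N) ℝ).rank = n) :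
    IsUnit (gramX n N x) :=
  isUnit_of_rank_eq_card <| by
    rw [gramX_eq_mul_transpose, rank_self_mul_transpose, hrank, Fintype.card_fin]

theorem gramX_mulVec (δ : Fin n → ℝ) : gramX n N x *ᵥ δ = ∑ t, (x t ⬝ᵥ δ) • x t := by
  ext i
  simp only [mulVec, gramX, dotProduct, of_apply, Finset.sum_apply, Pi.smul_apply, smul_eq_mul,
    sum_mul]
  rw [sum_comm]
  exact sum_congr rfl fun t _ => sum_congr rfl fun j _ => by ring

/-- The hat matrix `Xᵀ (X Xᵀ)⁻¹ X` is the identity on the row space of `X`, which contains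
`(⟨x_t, δ⟩)_t`. -/
theorem dotProduct_eq_sum_dotProduct_mul (hG : IsUnit (gramX n N x)) (v δ : Fin n → ℝ) :
    v ⬝ᵥ δ = ∑ t, (x t ⬝ᵥ δ) * (v ⬝ᵥ ((gramX n N x)⁻¹ *ᵥ x t)) := by
  have hδ : δ = (gramX n N x)⁻¹ *ᵥ (gramX n N x *ᵥ δ) := by
    rw [mulVec_mulVec, nonsing_inv_mul _ ((isUnit_iff_isUnit_det _).mp hG), one_mulVec]
  conv_lhs => rw [hδ, gramX_mulVec, mulVec_sum]
  simp only [mulVec_smul, dotProduct_sum, dotProduct_smul, smul_eq_mul]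

end Gram

theorem stmt8_general (n N : ℕ)
    (x : Fin N → Fin n → ℝ) (y : Fin N → ℝ)
    (hrank : (Matrix.of fun i t => x t i : Matrix (Fin n) (Fin N) ℝ).rank = n)
    (θ : Fin n → ℝ)
    (hnorm : ∀ c : Fin N,
      ∑ s ∈ (univ.filter (fun t => x t ⬝ᵥ θ = y t))ᶜ,
        |x s ⬝ᵥ ((gramX n N x)⁻¹ *ᵥ x c)| ≤ 1 / 2) :
    ∀ θ' : Fin n → ℝ, ∑ t, |y t - x t ⬝ᵥ θ| ≤ ∑ t, |y t - x t ⬝ᵥ θ'| := by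
  intro θ'
  have hφ : ∀ t ∈ univ.filter (fun t => x t ⬝ᵥ θ = y t), y t - x t ⬝ᵥ θ = 0 :=
    fun t ht => sub_eq_zero.mpr (mem_filter.mp ht).2.symm
  have hu := sum_abs_le_mul_sum_abs_of_eq_sum_mul _
    (fun s _ => dotProduct_eq_sum_dotProduct_mul x (isUnit_gramX x hrank) (x s) (θ' - θ)) hnorm
  calc ∑ t, |y t - x t ⬝ᵥ θ| ≤ ∑ t, |(y t - x t ⬝ᵥ θ) - x t ⬝ᵥ (θ' - θ)| :=
        sum_abs_le_sum_abs_sub _ hφ hu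
    _ = ∑ t, |y t - x t ⬝ᵥ θ'| := by simp only [dotProduct_sub, sub_sub_sub_cancel_right]

/-- If `rank X = n` and the induced 1-norm of
`X_{Iᶜ}^⊤ (X X^⊤)⁻¹ X` (rows indexed by `Iᶜ`, columns by `𝕀`), with
`I = I⁰(θ)`, is at most `1/2`, then `θ` solves the ℓ1 problem. -/
theorem stmt8 (n N : ℕ) (hn : 1 ≤ n) (hN : 1 ≤ N)
    (x : Fin N → Fin n → ℝ) (y : Fin N → ℝ)
    (hrank : (Matrix.of fun i t => x t i : Matrix (Fin n) (Fin N) ℝ).rank = n)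
    (θ : Fin n → ℝ)
    (hnorm : ∀ c : Fin N,
      ∑ s ∈ (univ.filter (fun t => x t ⬝ᵥ θ = y t))ᶜ,
        |x s ⬝ᵥ ((gramX n N x)⁻¹ *ᵥ x c)| ≤ 1 / 2) :
    ∀ θ' : Fin n → ℝ, ∑ t, |y t - x t ⬝ᵥ θ| ≤ ∑ t, |y t - x t ⬝ᵥ θ'| :=
  stmt8_general n N x y hrank θ hnorm
end

section
/- Suppose rank(X) = n. Let θ ∈ ℝ^n and set I = I⁰(θ) and I^c = 𝕀 \ I. If ‖X_{I^c}^⊤ (X X^⊤)^{−1} X‖₁ < 1/2, then θ is the unique minimizer of the ℓ1 problem, i.e., ‖φ(θ)‖₁ < ‖φ(θ')‖₁ for all θ' ≠ θ. -/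
open Matrix Finset

/-!
Let `a = Xᵀ (θ' - θ)` be the change of the fitted values. As `X Xᵀ` is invertible, `a` is fixed
by the projection `P = Xᵀ (X Xᵀ)⁻¹ X`, so `a_s = ∑_t P_{st} a_t`, and the column bound on `P`
restricted to the rows off `I⁰(θ)` gives `∑_{s ∉ I⁰(θ)} |a_s| < ‖a‖₁ / 2`. Since `φ(θ)` vanishes
on `I⁰(θ)` and `φ(θ') = φ(θ) - a`, the triangle inequality off `I⁰(θ)` yields
`‖φ(θ')‖₁ ≥ ‖φ(θ)‖₁ + ‖a‖₁ - 2 ∑_{s ∉ I⁰(θ)} |a_s| > ‖φ(θ)‖₁`.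
-/

theorem Matrix.isUnit_det_of_rank_eq_card {m K : Type*} [Fintype m] [DecidableEq m] [Field K]
    {A : Matrix m m K} (h : A.rank = Fintype.card m) : IsUnit A.det := by
  rw [← isUnit_iff_isUnit_det, ← mulVec_surjective_iff_isUnit, ← coe_mulVecLin,
    ← LinearMap.range_eq_top]
  apply Submodule.eq_top_of_finrank_eq
  rw [← Matrix.rank, h, Module.finrank_fintype_fun_eq_card]

section

variable {m n R : Type*} [Fintype m] [Fintype n] [DecidableEq m] [CommRing R]
  {X : Matrix m n R}

theorem Matrix.transpose_mulVec_injective_of_isUnit_det (h : IsUnit (X * Xᵀ).det) :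
    Function.Injective (Xᵀ *ᵥ ·) := by
  intro d d' hd
  have := congrArg (((X * Xᵀ)⁻¹ * X) *ᵥ ·) hd
  simpa only [mulVec_mulVec, Matrix.mul_assoc, nonsing_inv_mul _ h, one_mulVec] using this

theorem Matrix.transpose_mul_inv_mul_mulVec_transpose_mulVec (h : IsUnit (X * Xᵀ).det) (d : m → R) :
    (Xᵀ * (X * Xᵀ)⁻¹ * X) *ᵥ (Xᵀ *ᵥ d) = Xᵀ *ᵥ d := by
  rw [mulVec_mulVec, Matrix.mul_assoc, Matrix.mul_assoc, nonsing_inv_mul _ h, Matrix.mul_one]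

end

section

variable {ι : Type*} [Fintype ι]

theorem sum_abs_lt_mul_sum_abs_of_mulVec_eq_self {P : Matrix ι ι ℝ} {a : ι → ℝ}
    (ha : P *ᵥ a = a) (ha0 : a ≠ 0) (S : Finset ι) {c : ℝ}
    (hP : ∀ t, ∑ s ∈ S, |P s t| < c) :
    ∑ s ∈ S, |a s| < c * ∑ t, |a t| := by
  obtain ⟨t₀, ht₀⟩ := Function.ne_iff.1 ha0
  calc ∑ s ∈ S, |a s| = ∑ s ∈ S, |∑ t, P s t * a t| := by
        conv_lhs => rw [← ha]
        rfl
    _ ≤ ∑ s ∈ S, ∑ t, |P s t| * |a t| :=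
        sum_le_sum fun s _ => (abs_sum_le_sum_abs _ _).trans_eq (by simp only [abs_mul])
    _ = ∑ t, (∑ s ∈ S, |P s t|) * |a t| := by
        rw [sum_comm]
        simp only [sum_mul]
    _ < ∑ t, c * |a t| :=
        sum_lt_sum (fun t _ => mul_le_mul_of_nonneg_right (hP t).le (abs_nonneg _))
          ⟨t₀, mem_univ _, mul_lt_mul_of_pos_right (hP t₀) (abs_pos.2 ht₀)⟩
    _ = c * ∑ t, |a t| := (mul_sum _ _ _).symm

theorem sum_abs_lt_sum_abs_sub [DecidableEq ι] {r a : ι → ℝ} (S : Finset ι) (hr : ∀ t ∉ S, r t = 0)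
    (ha : 2 * ∑ s ∈ S, |a s| < ∑ t, |a t|) :
    ∑ t, |r t| < ∑ t, |r t - a t| := by
  have hr_S : ∑ t ∈ S, |r t| = ∑ t, |r t| :=
    sum_subset (subset_univ S) fun t _ ht => by simp [hr t ht]
  have hdiff_compl : ∑ t ∈ Sᶜ, |r t - a t| = ∑ t ∈ Sᶜ, |a t| :=
    sum_congr rfl fun t ht => by simp [hr t (mem_compl.1 ht)]
  have hdiff_S : ∑ t ∈ S, (|r t| - |a t|) ≤ ∑ t ∈ S, |r t - a t| :=
    sum_le_sum fun t _ => abs_sub_abs_le_abs_sub _ _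
  rw [sum_sub_distrib] at hdiff_S
  have ha_split := sum_add_sum_compl S fun t => |a t|
  have hdiff_split := sum_add_sum_compl S fun t => |r t - a t|
  linarith

end

theorem stmt9_general (n N : ℕ)
    (x : Fin N → Fin n → ℝ) (y : Fin N → ℝ)
    (hrank : (Matrix.of fun i t => x t i : Matrix (Fin n) (Fin N) ℝ).rank = n)
    (θ : Fin n → ℝ)
    (hnorm : ∀ c : Fin N,
      ∑ s ∈ (univ.filter (fun t => x t ⬝ᵥ θ = y t))ᶜ,
        |x s ⬝ᵥ ((gramX n N x)⁻¹ *ᵥ x c)| < 1 / 2) :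
    ∀ θ' : Fin n → ℝ, θ' ≠ θ → ∑ t, |y t - x t ⬝ᵥ θ| < ∑ t, |y t - x t ⬝ᵥ θ'| := by
  intro θ' hne
  set S := (univ.filter fun t => x t ⬝ᵥ θ = y t)ᶜ
  set X : Matrix (Fin n) (Fin N) ℝ := Matrix.of fun i t => x t i
  have hgram : gramX n N x = X * Xᵀ := by
    ext i j
    simp [gramX, X, mul_apply]
  have hdet : IsUnit (X * Xᵀ).det := isUnit_det_of_rank_eq_card <| by
    rw [rank_self_mul_transpose, hrank, Fintype.card_fin]
  set a := Xᵀ *ᵥ (θ' - θ)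
  have ha0 : a ≠ 0 := fun h => hne <| sub_eq_zero.1 <|
    transpose_mulVec_injective_of_isUnit_det hdet (h.trans (mulVec_zero _).symm)
  have hP : ∀ s t, (Xᵀ * (X * Xᵀ)⁻¹ * X) s t = x s ⬝ᵥ ((gramX n N x)⁻¹ *ᵥ x t) := by
    intro s t
    simp only [hgram, X, mul_apply, mulVec, dotProduct, transpose_apply, of_apply, mul_sum,
      sum_mul]
    rw [sum_comm]
    simp only [mul_assoc]
  have hbound : ∑ s ∈ S, |a s| < 1 / 2 * ∑ t, |a t| := sum_abs_lt_mul_sum_abs_of_mulVec_eq_self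
    (transpose_mul_inv_mul_mulVec_transpose_mulVec hdet _) ha0 _ fun t => by
      simpa only [hP] using hnorm t
  have hres : ∀ t, y t - x t ⬝ᵥ θ' = (y t - x t ⬝ᵥ θ) - a t := fun t => by
    simp [a, X, mulVec, dotProduct_sub]
  simp only [hres]
  refine sum_abs_lt_sum_abs_sub S (fun t ht => ?_) (by linarith)
  simpa [S, sub_eq_zero, eq_comm] using ht

/-- If `rank X = n` and the induced 1-norm of
`X_{Iᶜ}^⊤ (X X^⊤)⁻¹ X` (rows indexed by `Iᶜ`, columns by `𝕀`), with
`I = I⁰(θ)`, is less than `1/2`, then `θ` is the unique minimizer of the ℓ1 problem. -/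
theorem stmt9 (n N : ℕ) (hn : 1 ≤ n) (hN : 1 ≤ N)
    (x : Fin N → Fin n → ℝ) (y : Fin N → ℝ)
    (hrank : (Matrix.of fun i t => x t i : Matrix (Fin n) (Fin N) ℝ).rank = n)
    (θ : Fin n → ℝ)
    (hnorm : ∀ c : Fin N,
      ∑ s ∈ (univ.filter (fun t => x t ⬝ᵥ θ = y t))ᶜ,
        |x s ⬝ᵥ ((gramX n N x)⁻¹ *ᵥ x c)| < 1 / 2) :
    ∀ θ' : Fin n → ℝ, θ' ≠ θ → ∑ t, |y t - x t ⬝ᵥ θ| < ∑ t, |y t - x t ⬝ᵥ θ'| :=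
  stmt9_general n N x y hrank θ hnorm
end

section
/- Suppose rank(X) = n and the outputs are generated noise-free as y_t = ⟨x_t, θ^o⟩ + f_t for all t ∈ 𝕀, for some θ^o ∈ ℝ^n and f ∈ ℝ^N, so that I⁰(θ^o) = {t ∈ 𝕀 : f_t = 0}. If |I⁰(θ^o)| > N − 1/(2 r(X)), then θ^o is simultaneously the unique minimizer of the ℓ0 problem and the unique minimizer of the ℓ1 problem: for every θ ≠ θ^o, ‖φ(θ^o)‖₀ < ‖φ(θ)‖₀ and ‖φ(θ^o)‖₁ < ‖φ(θ)‖₁. -/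
open Matrix Finset

/-- `r(X) = max_{(k,t) ∈ 𝕀²} |x_k^⊤ (X X^⊤)⁻¹ x_t|`, expressed as the supremum
of the (finite, nonempty when `N ≥ 1`) set of such values. -/
noncomputable def rX (n N : ℕ) (x : Fin N → Fin n → ℝ) : ℝ :=
  sSup {v : ℝ | ∃ k t : Fin N, v = |x k ⬝ᵥ ((gramX n N x)⁻¹ *ᵥ x t)|}

lemma gram_inv_mul {n N : ℕ} (x : Fin N → Fin n → ℝ)
    (hrank : (Matrix.of fun i t => x t i : Matrix (Fin n) (Fin N) ℝ).rank = n) :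
    (gramX n N x)⁻¹ * gramX n N x = 1 := by
  set M : Matrix (Fin n) (Fin N) ℝ := Matrix.of fun i t => x t i with hM
  have hGM : gramX n N x = M * Mᵀ := by
    ext i j
    simp [gramX, Matrix.mul_apply, hM]
  have hGrank : (gramX n N x).rank = n := by
    rw [hGM, Matrix.rank_self_mul_transpose, hrank]
  have hsurj : Function.Surjective (gramX n N x).mulVec := by
    have htop : LinearMap.range (gramX n N x).mulVecLin = ⊤ := by
      apply Submodule.eq_top_of_finrank_eq
      have h1 : Module.finrank ℝ (LinearMap.range (gramX n N x).mulVecLin)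
          = (gramX n N x).rank := rfl
      rw [h1, hGrank, Module.finrank_fin_fun]
    intro w
    obtain ⟨v, hv⟩ := LinearMap.range_eq_top.mp htop w
    exact ⟨v, hv⟩
  have hunit : IsUnit (gramX n N x) := Matrix.mulVec_surjective_iff_isUnit.mp hsurj
  exact Matrix.nonsing_inv_mul _ ((Matrix.isUnit_iff_isUnit_det _).mp hunit)

lemma gram_mulVec {n N : ℕ} (x : Fin N → Fin n → ℝ) (v : Fin n → ℝ) :
    gramX n N x *ᵥ v = ∑ t, (x t ⬝ᵥ v) • x t := by
  ext i
  simp only [Matrix.mulVec, dotProduct, gramX, Matrix.of_apply,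
    Finset.sum_apply, Pi.smul_apply, smul_eq_mul, Finset.sum_mul]
  rw [Finset.sum_comm]
  refine Finset.sum_congr rfl fun t _ => ?_
  refine Finset.sum_congr rfl fun j _ => ?_
  ring

lemma dot_sum_smul {n N : ℕ} (k : Fin n → ℝ) (a : Fin N → ℝ) (u : Fin N → Fin n → ℝ) :
    k ⬝ᵥ (∑ t, a t • u t) = ∑ t, a t * (k ⬝ᵥ u t) := by
  simp only [dotProduct, Finset.sum_apply, Pi.smul_apply, smul_eq_mul,
    Finset.mul_sum]
  rw [Finset.sum_comm]
  refine Finset.sum_congr rfl fun t _ => ?_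
  refine Finset.sum_congr rfl fun i _ => ?_
  ring

lemma key_identity {n N : ℕ} (x : Fin N → Fin n → ℝ)
    (hinv : (gramX n N x)⁻¹ * gramX n N x = 1) (v : Fin n → ℝ) (k : Fin N) :
    x k ⬝ᵥ v = ∑ t, (x k ⬝ᵥ ((gramX n N x)⁻¹ *ᵥ x t)) * (x t ⬝ᵥ v) := by
  have hid : (gramX n N x)⁻¹ *ᵥ (gramX n N x *ᵥ v) = v := by
    rw [Matrix.mulVec_mulVec, hinv, Matrix.one_mulVec]
  have hms : (gramX n N x)⁻¹ *ᵥ (∑ t, (x t ⬝ᵥ v) • x t)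
      = ∑ t, (x t ⬝ᵥ v) • ((gramX n N x)⁻¹ *ᵥ x t) := by
    simp only [← Matrix.mulVecLin_apply, map_sum, _root_.map_smul]
  conv_lhs => rw [← hid, gram_mulVec, hms]
  rw [dot_sum_smul]
  exact Finset.sum_congr rfl fun t _ => mul_comm _ _

lemma dot_zero_of_all {n N : ℕ} (x : Fin N → Fin n → ℝ)
    (hinv : (gramX n N x)⁻¹ * gramX n N x = 1) (v : Fin n → ℝ)
    (h : ∀ t, x t ⬝ᵥ v = 0) : v = 0 := by
  have hid : (gramX n N x)⁻¹ *ᵥ (gramX n N x *ᵥ v) = v := by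
    rw [Matrix.mulVec_mulVec, hinv, Matrix.one_mulVec]
  have hz : gramX n N x *ᵥ v = 0 := by
    rw [gram_mulVec]
    refine Finset.sum_eq_zero fun t _ => ?_
    rw [h t, zero_smul]
  rw [← hid, hz, Matrix.mulVec_zero]

/-- Noise-free data, `rank X = n` and
`|I⁰(θ^o)| > N − 1/(2 r(X))` imply that `θ^o` is simultaneously the unique
minimizer of the ℓ0 problem and of the ℓ1 problem. -/
theorem stmt11 (n N : ℕ) (hn : 1 ≤ n) (hN : 1 ≤ N)
    (x : Fin N → Fin n → ℝ) (y : Fin N → ℝ)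
    (θo : Fin n → ℝ) (f : Fin N → ℝ)
    (hrank : (Matrix.of fun i t => x t i : Matrix (Fin n) (Fin N) ℝ).rank = n)
    (hdata : ∀ t, y t = x t ⬝ᵥ θo + f t)
    (hcard : (((univ.filter (fun t => x t ⬝ᵥ θo = y t)).card : ℝ)) >
      (N : ℝ) - 1 / (2 * rX n N x)) :
    ∀ θ : Fin n → ℝ, θ ≠ θo →
      (univ.filter (fun t => y t - x t ⬝ᵥ θo ≠ 0)).card <
        (univ.filter (fun t => y t - x t ⬝ᵥ θ ≠ 0)).card ∧
      ∑ t, |y t - x t ⬝ᵥ θo| < ∑ t, |y t - x t ⬝ᵥ θ| := by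
  classical
  intro θ hθ
  set r : ℝ := rX n N x with hr
  set c : Fin N → Fin N → ℝ := fun k t => x k ⬝ᵥ ((gramX n N x)⁻¹ *ᵥ x t) with hc
  have hinv := gram_inv_mul x hrank
  -- r bounds all |c k t|
  have hbdd : BddAbove {v : ℝ | ∃ k t : Fin N, v = |x k ⬝ᵥ ((gramX n N x)⁻¹ *ᵥ x t)|} := by
    have : {v : ℝ | ∃ k t : Fin N, v = |x k ⬝ᵥ ((gramX n N x)⁻¹ *ᵥ x t)|}
        = Set.range (fun p : Fin N × Fin N => |c p.1 p.2|) := by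
      ext v
      constructor
      · rintro ⟨k, t, h⟩; exact ⟨(k, t), h.symm⟩
      · rintro ⟨⟨k, t⟩, h⟩; exact ⟨k, t, h.symm⟩
    rw [this]
    exact (Set.finite_range _).bddAbove
  have hub : ∀ k t, |c k t| ≤ r := fun k t => le_csSup hbdd ⟨k, t, rfl⟩
  -- basic index-set bookkeeping
  set I : Finset (Fin N) := univ.filter (fun t => f t = 0) with hI
  have hIeq : univ.filter (fun t => x t ⬝ᵥ θo = y t) = I := by
    refine Finset.filter_congr fun t _ => ?_
    rw [hdata t]
    constructor
    · intro h; linarith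
    · intro h; rw [h, add_zero]
  rw [hIeq] at hcard
  set b : ℕ := (univ.filter (fun t => f t ≠ 0)).card with hb
  have hIb : I.card + b = N := by
    have := Finset.card_filter_add_card_filter_not
      (s := (univ : Finset (Fin N))) (p := fun t => f t = 0)
    simpa [hI, hb] using this
  -- positivity of r from hcard
  have hIcard_le : (I.card : ℝ) ≤ N := by
    have : I.card ≤ N := by
      calc I.card ≤ (univ : Finset (Fin N)).card := Finset.card_le_card (Finset.subset_univ _)
        _ = N := by simp
    exact_mod_cast this
  have h2r : 0 < 1 / (2 * r) := by linarith
  have hrpos : 0 < r := by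
    have h2 : 0 < 2 * r := one_div_pos.mp h2r
    linarith
  have hbr : (b : ℝ) < 1 / (2 * r) := by
    have : (I.card : ℝ) + b = N := by exact_mod_cast hIb
    linarith
  -- the difference vector
  set Δ : Fin n → ℝ := θ - θo with hΔ
  set g : Fin N → ℝ := fun t => x t ⬝ᵥ Δ with hg
  have hΔne : Δ ≠ 0 := sub_ne_zero.mpr hθ
  have hex : ∃ t, g t ≠ 0 := by
    by_contra h
    push_neg at h
    exact hΔne (dot_zero_of_all x hinv Δ h)
  -- residuals
  have hres_o : ∀ t, y t - x t ⬝ᵥ θo = f t := fun t => by rw [hdata t]; ring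
  have hres : ∀ t, y t - x t ⬝ᵥ θ = f t - g t := by
    intro t
    have hgt : g t = x t ⬝ᵥ θ - x t ⬝ᵥ θo := by
      show x t ⬝ᵥ (θ - θo) = _
      rw [dotProduct_sub]
    rw [hdata t, hgt]; ring
  -- max of |g|
  obtain ⟨t₁, ht₁⟩ := hex
  obtain ⟨k₀, -, hk₀⟩ := Finset.exists_max_image (univ : Finset (Fin N))
    (fun t => |g t|) ⟨t₁, Finset.mem_univ t₁⟩
  set m : ℝ := |g k₀| with hm
  have hmpos : 0 < m := lt_of_lt_of_le (abs_pos.mpr ht₁) (hk₀ t₁ (Finset.mem_univ t₁))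
  have hmax : ∀ t, |g t| ≤ m := fun t => hk₀ t (Finset.mem_univ t)
  -- key inequality: m ≤ r * S
  set S : ℝ := ∑ t, |g t| with hS
  have hkey : m ≤ r * S := by
    have h0 : g k₀ = ∑ t, c k₀ t * g t := key_identity x hinv Δ k₀
    calc m = |∑ t, c k₀ t * g t| := by rw [hm, h0]
      _ ≤ ∑ t, |c k₀ t * g t| := Finset.abs_sum_le_sum_abs _ _
      _ ≤ ∑ t, r * |g t| := by
          refine Finset.sum_le_sum fun t _ => ?_
          rw [abs_mul]
          exact mul_le_mul_of_nonneg_right (hub k₀ t) (abs_nonneg _)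
      _ = r * S := by rw [hS, Finset.mul_sum]
  -- support of g
  set A : Finset (Fin N) := univ.filter (fun t => g t ≠ 0) with hA
  have hSA : S = ∑ t ∈ A, |g t| := by
    rw [hS]
    refine (Finset.sum_subset (Finset.subset_univ A) fun t _ ht => ?_).symm
    simp only [hA, Finset.mem_filter, Finset.mem_univ, true_and, not_not] at ht
    rw [ht, abs_zero]
  have hSle : S ≤ (A.card : ℝ) * m := by
    rw [hSA]
    calc ∑ t ∈ A, |g t| ≤ ∑ _t ∈ A, m := Finset.sum_le_sum fun t _ => hmax t
      _ = (A.card : ℝ) * m := by rw [Finset.sum_const, nsmul_eq_mul]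
  have hAcard : 1 / r ≤ (A.card : ℝ) := by
    have h2 : m ≤ r * ((A.card : ℝ) * m) :=
      le_trans hkey (mul_le_mul_of_nonneg_left hSle hrpos.le)
    rw [div_le_iff₀ hrpos]
    nlinarith
  have h2b' : 2 * (b : ℝ) < 1 / r := by
    have h := hbr
    rw [lt_div_iff₀ (by positivity : (0:ℝ) < 2 * r)] at h
    rw [lt_div_iff₀ hrpos]
    nlinarith
  have h2bN : 2 * b < A.card := by
    have : (2 * b : ℝ) < A.card := by
      push_cast
      linarith
    exact_mod_cast this
  constructor
  · -- ℓ0 part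
    have hLHS : univ.filter (fun t => y t - x t ⬝ᵥ θo ≠ 0) = univ.filter (fun t => f t ≠ 0) := by
      refine Finset.filter_congr fun t _ => by rw [hres_o t]
    have hsub : A ∩ I ⊆ univ.filter (fun t => y t - x t ⬝ᵥ θ ≠ 0) := by
      intro t ht
      simp only [hA, hI, Finset.mem_inter, Finset.mem_filter, Finset.mem_univ, true_and] at ht ⊢
      rw [hres t, ht.2, zero_sub, neg_ne_zero]
      exact ht.1
    have hsplit : A.card ≤ (A ∩ I).card + b := by
      have h1 : A ⊆ (A ∩ I) ∪ (univ.filter (fun t => f t ≠ 0)) := by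
        intro t ht
        rcases em (f t = 0) with h | h
        · exact Finset.mem_union_left _ (Finset.mem_inter.mpr ⟨ht, by simp [hI, h]⟩)
        · exact Finset.mem_union_right _ (by simp [h])
      calc A.card ≤ ((A ∩ I) ∪ (univ.filter (fun t => f t ≠ 0))).card := Finset.card_le_card h1
        _ ≤ (A ∩ I).card + b := Finset.card_union_le _ _
    rw [hLHS]
    have : b < (A ∩ I).card := by omega
    exact lt_of_lt_of_le this (Finset.card_le_card hsub)
  · -- ℓ1 part
    have hLHS : ∑ t, |y t - x t ⬝ᵥ θo| = ∑ t, |f t| :=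
      Finset.sum_congr rfl fun t _ => by rw [hres_o t]
    have hRHS : ∑ t, |y t - x t ⬝ᵥ θ| = ∑ t, |f t - g t| :=
      Finset.sum_congr rfl fun t _ => by rw [hres t]
    rw [hLHS, hRHS]
    have hsplit1 : ∑ t, |f t - g t|
        = ∑ t ∈ I, |f t - g t| + ∑ t ∈ univ.filter (fun t => ¬ f t = 0), |f t - g t| := by
      rw [hI, ← Finset.sum_filter_add_sum_filter_not univ (fun t => f t = 0)]
    have hsplit2 : ∑ t, |f t|
        = ∑ t ∈ I, |f t| + ∑ t ∈ univ.filter (fun t => ¬ f t = 0), |f t| := by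
      rw [hI, ← Finset.sum_filter_add_sum_filter_not univ (fun t => f t = 0)]
    have hsplit3 : S = ∑ t ∈ I, |g t| + ∑ t ∈ univ.filter (fun t => ¬ f t = 0), |g t| := by
      rw [hS, hI, ← Finset.sum_filter_add_sum_filter_not univ (fun t => f t = 0)]
    have hI1 : ∑ t ∈ I, |f t - g t| = ∑ t ∈ I, |g t| := by
      refine Finset.sum_congr rfl fun t ht => ?_
      simp only [hI, Finset.mem_filter] at ht
      rw [ht.2, zero_sub, abs_neg]
    have hI2 : ∑ t ∈ I, |f t| = 0 := by
      refine Finset.sum_eq_zero fun t ht => ?_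
      simp only [hI, Finset.mem_filter] at ht
      rw [ht.2, abs_zero]
    have hC1 : ∑ t ∈ univ.filter (fun t => ¬ f t = 0), |f t|
        - ∑ t ∈ univ.filter (fun t => ¬ f t = 0), |g t|
        ≤ ∑ t ∈ univ.filter (fun t => ¬ f t = 0), |f t - g t| := by
      rw [← Finset.sum_sub_distrib]
      exact Finset.sum_le_sum fun t _ => abs_sub_abs_le_abs_sub (f t) (g t)
    have hC2 : ∑ t ∈ univ.filter (fun t => ¬ f t = 0), |g t| ≤ (b : ℝ) * m := by
      calc ∑ t ∈ univ.filter (fun t => ¬ f t = 0), |g t|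
          ≤ ∑ _t ∈ univ.filter (fun t => ¬ f t = 0), m :=
            Finset.sum_le_sum fun t _ => hmax t
        _ = (b : ℝ) * m := by
            rw [Finset.sum_const, nsmul_eq_mul, hb]
    have hSm : m / r ≤ S := by
      rw [div_le_iff₀ hrpos]
      calc m ≤ r * S := hkey
        _ = S * r := mul_comm _ _
    have h2br : 2 * (b : ℝ) * r < 1 := by
      rw [lt_div_iff₀ hrpos] at h2b'
      exact h2b'
    have h2bm : (b : ℝ) * m + (b : ℝ) * m < m / r := by
      rw [lt_div_iff₀ hrpos]
      nlinarith [mul_pos hmpos (sub_pos.mpr h2br)]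
    linarith
end

section
/- Suppose rank(X) = n. Then 1/r(X) ≤ N − ν_n(X) + 1, i.e., r(X) · (N − ν_n(X) + 1) ≥ 1. -/
open Matrix Finset

/-- Rank is invariant under re-indexing columns by an equivalence. -/
lemma auxRankSub {m q p : Type*} [Fintype q] [Fintype p] (A : Matrix m p ℝ) (e : q ≃ p) :
    (A.submatrix id e).rank = A.rank := by
  rw [Matrix.rank, Matrix.rank, Matrix.mulVecLin_submatrix id e]
  have hid : LinearMap.funLeft ℝ ℝ (id : m → m) = LinearMap.id := by
    ext g i; rfl
  rw [hid, LinearMap.id_comp]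
  rw [LinearMap.range_comp_of_range_eq_top]
  rw [LinearMap.range_eq_top]
  exact (LinearEquiv.funCongrLeft ℝ ℝ e.symm).surjective

/-- Rank-nullity: a matrix with `p` columns and rank `p` has trivial kernel. -/
lemma auxKerEqBot {p : ℕ} {m : Type*} [Fintype m] (M : Matrix m (Fin p) ℝ)
    (h : M.rank = p) : LinearMap.ker M.mulVecLin = ⊥ := by
  have h1 := LinearMap.finrank_range_add_finrank_ker M.mulVecLin
  have h2 : Module.finrank ℝ ↥(LinearMap.range M.mulVecLin) = M.rank := rfl
  rw [h2, h, Module.finrank_pi, Fintype.card_fin] at h1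
  exact Submodule.finrank_eq_zero.mp (by omega)

/-- Rank-nullity: a matrix with `p` columns and rank `< p` has nontrivial kernel. -/
lemma auxKerNeBot {p : ℕ} {m : Type*} [Fintype m] (M : Matrix m (Fin p) ℝ)
    (h : M.rank < p) : LinearMap.ker M.mulVecLin ≠ ⊥ := by
  intro hbot
  have h1 := LinearMap.finrank_range_add_finrank_ker M.mulVecLin
  have h2 : Module.finrank ℝ ↥(LinearMap.range M.mulVecLin) = M.rank := rfl
  rw [h2, hbot, finrank_bot, Module.finrank_pi, Fintype.card_fin, add_zero] at h1
  omega

/-- Dot product commutes with finite sums in the second argument. -/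
lemma auxDotSum {n : ℕ} {ι : Type*} [Fintype ι] (v : Fin n → ℝ) (w : ι → Fin n → ℝ) :
    v ⬝ᵥ (∑ k, w k) = ∑ k, v ⬝ᵥ w k := by
  simp only [dotProduct, Finset.sum_apply, Finset.mul_sum]
  rw [Finset.sum_comm]

/-- If `rank X = n` then `1/r(X) ≤ N − ν_n(X) + 1`, i.e.
`r(X) · (N − ν_n(X) + 1) ≥ 1`. -/
theorem stmt12 (n N : ℕ) (hn : 1 ≤ n) (hN : 1 ≤ N)
    (x : Fin N → Fin n → ℝ)
    (hrank : (Matrix.of fun i t => x t i : Matrix (Fin n) (Fin N) ℝ).rank = n) :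
    rX n N x * ((N : ℝ) - (nuX n N x : ℝ) + 1) ≥ 1 := by
  classical
  set X : Matrix (Fin n) (Fin N) ℝ := Matrix.of fun i t => x t i with hX
  set G : Matrix (Fin n) (Fin n) ℝ := gramX n N x with hGdef
  -- G = X * Xᵀ
  have hG : G = X * Xᵀ := by
    ext i j
    simp [hGdef, gramX, Matrix.mul_apply, hX]
  -- G is invertible
  have hGrank : G.rank = n := by
    rw [hG, Matrix.rank_self_mul_transpose, hrank]
  have hGunit : IsUnit G := by
    rw [← Matrix.mulVec_surjective_iff_isUnit]
    have hrange : LinearMap.range G.mulVecLin = ⊤ := by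
      apply Submodule.eq_top_of_finrank_eq
      rw [show Module.finrank ℝ ↥(LinearMap.range G.mulVecLin) = G.rank from rfl, hGrank]
      simp [Module.finrank_pi]
    intro v
    have := hrange ▸ Submodule.mem_top (x := v) (R := ℝ)
    obtain ⟨w, hw⟩ := this
    exact ⟨w, hw⟩
  have hGinv : G⁻¹ * G = 1 := Matrix.nonsing_inv_mul G (G.isUnit_iff_isUnit_det.mp hGunit)
  -- basic facts about ν
  set ν : ℕ := nuX n N x with hνdef
  set T : Set ℕ := {m : ℕ | ∀ S : Finset (Fin N), S.card = m → (colSub n N x S).rank = n}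
    with hT
  have hNmem : N ∈ T := by
    intro S hS
    have hSuniv : S = Finset.univ := by
      apply Finset.eq_univ_of_card
      simpa using hS
    subst hSuniv
    have hcs : colSub n N x Finset.univ =
        X.submatrix id (Equiv.subtypeUnivEquiv
          (fun t : Fin N => Finset.mem_univ t)) := rfl
    rw [hcs]
    exact (auxRankSub X (Equiv.subtypeUnivEquiv
      (fun t : Fin N => Finset.mem_univ t))).trans hrank
  have hνN : ν ≤ N := Nat.sInf_le hNmem
  have hν1 : 1 ≤ ν := by
    by_contra h
    have hν0 : ν = 0 := by omega
    rcases Nat.sInf_eq_zero.mp hν0 with h0 | hempty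
    · have hcard0 : Fintype.card {t : Fin N // t ∈ (∅ : Finset (Fin N))} = 0 := by simp
      have hle := Matrix.rank_le_card_width (colSub n N x (∅ : Finset (Fin N)))
      rw [hcard0] at hle
      have h00 := h0 (∅ : Finset (Fin N)) (by simp)
      omega
    · rw [hT] at hNmem
      rw [hempty] at hNmem
      exact hNmem
  -- a rank-deficient set of size ν - 1
  have hνT : sInf T = ν := rfl
  have hnotmem : (ν - 1) ∉ T := Nat.notMem_of_lt_sInf (by rw [hνT]; omega)
  obtain ⟨S, hScard, hSrank⟩ : ∃ S : Finset (Fin N), S.card = ν - 1 ∧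
      (colSub n N x S).rank ≠ n := by
    by_contra h
    push_neg at h
    exact hnotmem (fun S hS => h S hS)
  set A : Matrix (Fin n) {t // t ∈ S} ℝ := colSub n N x S with hA
  have hArank : A.rank < n :=
    lt_of_le_of_ne (by simpa using Matrix.rank_le_card_height A) hSrank
  -- a nonzero vector orthogonal to all columns in S
  have hAtrank : Aᵀ.rank < n := by rw [Matrix.rank_transpose]; exact hArank
  have hker : LinearMap.ker Aᵀ.mulVecLin ≠ ⊥ := auxKerNeBot Aᵀ hAtrank
  obtain ⟨u, hu_mem, hu_ne⟩ := Submodule.exists_mem_ne_zero_of_ne_bot hker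
  have hu : ∀ t ∈ S, x t ⬝ᵥ u = 0 := by
    intro t ht
    exact congrFun (LinearMap.mem_ker.mp hu_mem) ⟨t, ht⟩
  -- the vector d
  set d : Fin N → ℝ := fun t => x t ⬝ᵥ u with hd
  have hd0 : ∀ t ∈ S, d t = 0 := fun t ht => hu t ht
  have hdne : d ≠ 0 := by
    intro h0
    apply hu_ne
    have hXrank : Xᵀ.rank = n := by rw [Matrix.rank_transpose, hrank]
    have hXker : LinearMap.ker Xᵀ.mulVecLin = ⊥ := auxKerEqBot Xᵀ hXrank
    have hmem : u ∈ LinearMap.ker Xᵀ.mulVecLin := by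
      rw [LinearMap.mem_ker]
      exact h0
    rw [hXker] at hmem
    simpa using hmem
  -- pick the coordinate of maximal absolute value
  have hNe : (Finset.univ : Finset (Fin N)).Nonempty := by
    have : Nonempty (Fin N) := ⟨⟨0, hN⟩⟩
    exact Finset.univ_nonempty
  obtain ⟨t₀, -, ht₀⟩ := Finset.exists_max_image Finset.univ (fun t => |d t|) hNe
  have ht₀max : ∀ k, |d k| ≤ |d t₀| := fun k => ht₀ k (Finset.mem_univ k)
  have ht₀pos : 0 < |d t₀| := by
    by_contra h
    push_neg at h
    apply hdne
    funext k
    have h1 := ht₀max k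
    have h2 : |d k| = 0 := le_antisymm (by linarith) (abs_nonneg _)
    simpa using abs_eq_zero.mp h2
  -- rX bounds
  set r : ℝ := rX n N x with hr
  have hfin : {v : ℝ | ∃ k t : Fin N, v = |x k ⬝ᵥ (G⁻¹ *ᵥ x t)|}.Finite := by
    apply (Set.finite_range (fun p : Fin N × Fin N => |x p.1 ⬝ᵥ (G⁻¹ *ᵥ x p.2)|)).subset
    rintro v ⟨k, t, rfl⟩
    exact ⟨(k, t), rfl⟩
  have hr_ub : ∀ k t : Fin N, |x k ⬝ᵥ (G⁻¹ *ᵥ x t)| ≤ r :=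
    fun k t => le_csSup hfin.bddAbove ⟨k, t, rfl⟩
  have hr0 : 0 ≤ r := le_trans (abs_nonneg _) (hr_ub ⟨0, hN⟩ ⟨0, hN⟩)
  -- the key identity: d t₀ = ∑ k, (x t₀ ⬝ᵥ G⁻¹ x k) * d k
  have hGu : G *ᵥ u = ∑ k, d k • x k := by
    funext i
    simp only [Matrix.mulVec, dotProduct, hGdef, gramX, Matrix.of_apply,
      Finset.sum_apply, Pi.smul_apply, smul_eq_mul, hd]
    simp_rw [Finset.sum_mul]
    rw [Finset.sum_comm]
    apply Finset.sum_congr rfl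
    intro t _
    apply Finset.sum_congr rfl
    intro j _
    ring
  have hlin : G⁻¹ *ᵥ (∑ k, d k • x k) = ∑ k, d k • (G⁻¹ *ᵥ x k) := by
    rw [← Matrix.mulVecLin_apply, map_sum]
    simp [Matrix.mulVecLin_apply]
  have key : d t₀ = ∑ k, (x t₀ ⬝ᵥ (G⁻¹ *ᵥ x k)) * d k := by
    have h1 : x t₀ ⬝ᵥ u = x t₀ ⬝ᵥ (G⁻¹ *ᵥ (G *ᵥ u)) := by
      rw [Matrix.mulVec_mulVec, hGinv, Matrix.one_mulVec]
    calc d t₀ = x t₀ ⬝ᵥ u := rfl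
      _ = x t₀ ⬝ᵥ (G⁻¹ *ᵥ (G *ᵥ u)) := h1
      _ = x t₀ ⬝ᵥ (∑ k, d k • (G⁻¹ *ᵥ x k)) := by rw [hGu, hlin]
      _ = ∑ k, (x t₀ ⬝ᵥ (G⁻¹ *ᵥ x k)) * d k := by
          rw [auxDotSum]
          apply Finset.sum_congr rfl
          intro k _
          rw [dotProduct_smul, smul_eq_mul, mul_comm]
  -- restrict to Sᶜ
  have key2 : d t₀ = ∑ k ∈ Sᶜ, (x t₀ ⬝ᵥ (G⁻¹ *ᵥ x k)) * d k := by
    rw [key]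
    symm
    apply Finset.sum_subset (Finset.subset_univ Sᶜ)
    intro k _ hk
    have : k ∈ S := by simpa using hk
    rw [hd0 k this, mul_zero]
  -- the chain of bounds
  have hbound : |d t₀| ≤ (Sᶜ.card : ℝ) * (r * |d t₀|) := by
    calc |d t₀| = |∑ k ∈ Sᶜ, (x t₀ ⬝ᵥ (G⁻¹ *ᵥ x k)) * d k| := by rw [← key2]
      _ ≤ ∑ k ∈ Sᶜ, |(x t₀ ⬝ᵥ (G⁻¹ *ᵥ x k)) * d k| := Finset.abs_sum_le_sum_abs _ _
      _ ≤ ∑ _k ∈ Sᶜ, r * |d t₀| := by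
          apply Finset.sum_le_sum
          intro k _
          rw [abs_mul]
          exact mul_le_mul (hr_ub t₀ k) (ht₀max k) (abs_nonneg _) hr0
      _ = (Sᶜ.card : ℝ) * (r * |d t₀|) := by rw [Finset.sum_const, nsmul_eq_mul]
  have hone : 1 ≤ r * (Sᶜ.card : ℝ) := by
    nlinarith [ht₀pos, hbound]
  have hcard : (Sᶜ.card : ℝ) = (N : ℝ) - (ν : ℝ) + 1 := by
    rw [Finset.card_compl, hScard, Fintype.card_fin]
    have h1 : ν - 1 ≤ N := by omega
    push_cast [Nat.cast_sub h1, Nat.cast_sub hν1]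
    ring
  rw [ge_iff_le, ← hcard]
  exact hone
end

section
/- A matrix A* ∈ ℝ^{m×n} solves the sum-of-norms problem (i.e., Σ_{t=1}^N ‖y_t − A* x_t‖₂ ≤ Σ_{t=1}^N ‖y_t − A x_t‖₂ for all A ∈ ℝ^{m×n}) if and only if there exist vectors β_t ∈ ℝ^m with ‖β_t‖₂ ≤ 1 for each t ∈ I⁰(A*), such that Σ_{t ∉ I⁰(A*)} v*_t x_t^⊤ + Σ_{t ∈ I⁰(A*)} β_t x_t^⊤ = 0, where v*_t = (y_t − A* x_t)/‖y_t − A* x_t‖₂ for t ∉ I⁰(A*). -/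
/-!
`A*` minimizes the convex function `f A = ∑ ‖y_t - A x_t‖` iff `0` is a subgradient of `f` at `A*`.
For necessity, expanding `f (A* + ε D) ≥ f (A*)` to first order in `ε` shows that the linear
functional `D ↦ -∑_{t ∉ I⁰} ⟪v*_t, D x_t⟫` is dominated by the seminorm `D ↦ ∑_{t ∈ I⁰} ‖D x_t‖`;
by Hahn–Banach and Riesz it then equals `D ↦ ∑_{t ∈ I⁰} ⟪β_t, D x_t⟫` with `‖β_t‖ ≤ 1`.
For sufficiency, `v*_t` and `β_t` are subgradients of the norm at the residuals, and summing the
subgradient inequalities gives `f A ≥ f A*`. Only the linearity of `A ↦ A x_t` is used, so all of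
this holds for arbitrary linear maps `L_t : V → E` into a real Hilbert space.
-/

open Matrix Finset

/-- The Euclidean norm on `Fin m → ℝ`. -/
noncomputable def enorm (m : ℕ) (v : Fin m → ℝ) : ℝ :=
  Real.sqrt (∑ i, v i ^ 2)

open scoped RealInnerProductSpace

section InnerProductSpace

variable {E : Type*} [NormedAddCommGroup E] [InnerProductSpace ℝ E]

lemma norm_inv_norm_smul_le_one (r : E) : ‖‖r‖⁻¹ • r‖ ≤ 1 := by
  rcases eq_or_ne r 0 with rfl | hr
  · simp
  · exact (norm_smul_inv_norm hr).le

-- At `r = 0` both sides vanish, since `‖0‖⁻¹ • 0 = 0`.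
lemma real_inner_inv_norm_smul_self (r : E) : ⟪‖r‖⁻¹ • r, r⟫ = ‖r‖ := by
  rw [real_inner_smul_left, real_inner_self_eq_norm_sq]
  rcases eq_or_ne ‖r‖ 0 with h | h
  · simp [h]
  · field_simp

lemma norm_add_real_inner_le_norm_add {g r : E} (hg : ‖g‖ ≤ 1) (hgr : ⟪g, r⟫ = ‖r‖) (w : E) :
    ‖r‖ + ⟪g, w⟫ ≤ ‖r + w‖ :=
  calc ‖r‖ + ⟪g, w⟫ = ⟪g, r + w⟫ := by rw [inner_add_right, hgr]
    _ ≤ ‖g‖ * ‖r + w‖ := real_inner_le_norm _ _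
    _ ≤ ‖r + w‖ := mul_le_of_le_one_left (norm_nonneg _) hg

lemma norm_sub_le_of_ne_zero {r : E} (hr : r ≠ 0) (w : E) :
    ‖r - w‖ ≤ ‖r‖ - ⟪‖r‖⁻¹ • r, w⟫ + ‖w‖ ^ 2 / (2 * ‖r‖) := by
  have hpos : 0 < ‖r‖ := norm_pos_iff.mpr hr
  have hsq := norm_sub_sq_real r w
  have hgap : ‖r‖ - ‖r‖⁻¹ * ⟪r, w⟫ + ‖w‖ ^ 2 / (2 * ‖r‖) - ‖r - w‖ =
      (‖r‖ - ‖r - w‖) ^ 2 / (2 * ‖r‖) := by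
    field_simp
    linear_combination -hsq
  rw [real_inner_smul_left, ← sub_nonneg, hgap]
  positivity

open Filter Topology in
lemma nonneg_of_forall_pos_nonneg_add_mul {a C : ℝ} (h : ∀ ε : ℝ, 0 < ε → 0 ≤ a + ε * C) :
    0 ≤ a := by
  have hlim : Tendsto (fun ε => a + ε * C) (𝓝[>] 0) (𝓝 a) := by
    have hcont : Continuous (fun ε => a + ε * C) := by fun_prop
    simpa using (hcont.tendsto 0).mono_left nhdsWithin_le_nhds
  exact ge_of_tendsto hlim (eventually_nhdsWithin_of_forall h)

lemma sum_inner_le_sum_norm_of_forall_sum_norm_le {ι : Type*} [Fintype ι] [DecidableEq ι]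
    {r : ι → E} {s : Finset ι} (hs : ∀ t, t ∈ s ↔ r t = 0) (w : ι → E)
    (h : ∀ ε : ℝ, 0 < ε → ∑ t, ‖r t‖ ≤ ∑ t, ‖r t - ε • w t‖) :
    ∑ t ∈ sᶜ, ⟪‖r t‖⁻¹ • r t, w t⟫ ≤ ∑ t ∈ s, ‖w t‖ := by
  refine sub_nonneg.mp <| nonneg_of_forall_pos_nonneg_add_mul
    (C := ∑ t ∈ sᶜ, ‖w t‖ ^ 2 / (2 * ‖r t‖)) fun ε hε => ?_
  have hzero : ∀ t ∈ s, ‖r t - ε • w t‖ = ‖r t‖ + ε * ‖w t‖ := fun t ht => by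
    simp [(hs t).mp ht, norm_smul, hε.le]
  have hnonzero : ∀ t ∈ sᶜ, ‖r t - ε • w t‖ ≤
      ‖r t‖ + ε * -⟪‖r t‖⁻¹ • r t, w t⟫ + ε * (ε * (‖w t‖ ^ 2 / (2 * ‖r t‖))) := fun t ht => by
    have hr : r t ≠ 0 := fun h0 => mem_compl.mp ht ((hs t).mpr h0)
    have := norm_sub_le_of_ne_zero hr (ε • w t)
    rw [inner_smul_right, norm_smul, Real.norm_of_nonneg hε.le] at this
    linarith [show (ε * ‖w t‖) ^ 2 / (2 * ‖r t‖) = ε * (ε * (‖w t‖ ^ 2 / (2 * ‖r t‖))) by ring]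
  have hmin := h ε hε
  rw [← sum_add_sum_compl s, ← sum_add_sum_compl s (fun t => ‖r t - ε • w t‖),
    sum_congr rfl hzero] at hmin
  have hsum := sum_le_sum hnonzero
  simp only [sum_add_distrib, ← mul_sum, sum_neg_distrib] at hsum hmin
  have : 0 ≤ ε * (∑ t ∈ s, ‖w t‖ - ∑ t ∈ sᶜ, ⟪‖r t‖⁻¹ • r t, w t⟫ +
      ε * ∑ t ∈ sᶜ, ‖w t‖ ^ 2 / (2 * ‖r t‖)) := by linarith
  exact nonneg_of_mul_nonneg_right this hε

lemma exists_norm_le_one_forall_inner_eq [CompleteSpace E] (φ : E →ₗ[ℝ] ℝ)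
    (hφ : ∀ e, |φ e| ≤ ‖e‖) : ∃ b : E, ‖b‖ ≤ 1 ∧ ∀ e, ⟪b, e⟫ = φ e := by
  let φc := φ.mkContinuous 1 fun e => by simpa using hφ e
  refine ⟨(InnerProductSpace.toDual ℝ E).symm φc, ?_,
    fun e => InnerProductSpace.toDual_symm_apply⟩
  rw [LinearIsometryEquiv.norm_map]
  exact LinearMap.mkContinuous_norm_le _ zero_le_one _

end InnerProductSpace

lemma Module.Dual.exists_comp_eq_of_le_seminorm {V Z : Type*} [AddCommGroup V] [Module ℝ V]
    [AddCommGroup Z] [Module ℝ Z] (Λ : V →ₗ[ℝ] Z) (g : Module.Dual ℝ V) {p : Seminorm ℝ Z}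
    (h : ∀ d, g d ≤ p (Λ d)) : ∃ H : Module.Dual ℝ Z, (∀ z, |H z| ≤ p z) ∧ ∀ d, H (Λ d) = g d := by
  have hker : LinearMap.ker Λ ≤ LinearMap.ker g := fun d hd => by
    have hp : p (Λ d) = 0 := by rw [LinearMap.mem_ker.mp hd, map_zero]
    have hneg := h (-d)
    rw [map_neg, map_neg, map_neg_eq_map, hp] at hneg
    exact le_antisymm (hp ▸ h d) (by linarith)
  let f : Module.Dual ℝ (LinearMap.range Λ) :=
    (LinearMap.ker Λ).liftQ g hker ∘ₗ Λ.quotKerEquivRange.symm.toLinearMap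
  have hf : ∀ d, f ⟨Λ d, LinearMap.mem_range_self Λ d⟩ = g d := fun d => by
    simp [f, LinearMap.quotKerEquivRange_symm_apply_image]
  obtain ⟨H, hHf, hHp⟩ := Module.Dual.exists_extension_of_le_seminorm_real _ f (p := p) <| by
    rintro ⟨_, d, rfl⟩
    exact (hf d).trans_le (h d)
  exact ⟨H, hHp, fun d => (hHf ⟨Λ d, LinearMap.mem_range_self Λ d⟩).trans (hf d)⟩

lemma sum_norm_pi_single_le {ι E : Type*} [DecidableEq ι] [SeminormedAddCommGroup E]
    (s : Finset ι) (t : ι) (e : E) : ∑ u ∈ s, ‖Pi.single (M := fun _ => E) t e u‖ ≤ ‖e‖ := by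
  have hnorm : ∀ u, ‖Pi.single (M := fun _ => E) t e u‖ = Pi.single (M := fun _ => ℝ) t ‖e‖ u :=
    fun u => by by_cases hu : u = t <;> simp [hu]
  simp only [hnorm, sum_pi_single']
  split_ifs <;> simp

theorem exists_forall_eq_sum_inner_of_le_sum_norm {ι V E : Type*} [DecidableEq ι]
    [AddCommGroup V] [Module ℝ V] [NormedAddCommGroup E] [InnerProductSpace ℝ E] [CompleteSpace E]
    (s : Finset ι) (L : ι → V →ₗ[ℝ] E) (g : Module.Dual ℝ V) (h : ∀ d, g d ≤ ∑ t ∈ s, ‖L t d‖) :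
    ∃ β : ι → E, (∀ t, ‖β t‖ ≤ 1) ∧ ∀ d, g d = ∑ t ∈ s, ⟪β t, L t d⟫ := by
  let p : Seminorm ℝ (ι → E) := ∑ t ∈ s, (normSeminorm ℝ E).comp (LinearMap.proj t)
  have hp : ∀ z, p z = ∑ t ∈ s, ‖z t‖ := fun z => by simp [p]
  let Λ : V →ₗ[ℝ] ι → E := ∑ t ∈ s, LinearMap.single ℝ (fun _ => E) t ∘ₗ L t
  have hΛ : ∀ d, Λ d = ∑ t ∈ s, Pi.single t (L t d) := fun d => by simp [Λ]
  have hpΛ : ∀ d, p (Λ d) = ∑ t ∈ s, ‖L t d‖ := fun d => by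
    rw [hp, hΛ]
    exact sum_congr rfl fun t ht => by simp [ht]
  obtain ⟨H, hHp, hHg⟩ := Module.Dual.exists_comp_eq_of_le_seminorm Λ g fun d => (hpΛ d).symm ▸ h d
  have hβ : ∀ t, ∃ b : E, ‖b‖ ≤ 1 ∧ ∀ e, ⟪b, e⟫ = H (Pi.single t e) := fun t =>
    exists_norm_le_one_forall_inner_eq (H ∘ₗ LinearMap.single ℝ (fun _ => E) t) fun e =>
      (hHp _).trans ((hp _).trans_le (sum_norm_pi_single_le s t e))
  choose β hβ1 hβH using hβ
  refine ⟨β, hβ1, fun d => ?_⟩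
  rw [← hHg, hΛ, map_sum]
  exact sum_congr rfl fun t _ => (hβH t _).symm

section LinearModel

variable {ι V E : Type*} [Fintype ι] [DecidableEq ι] [AddCommGroup V] [Module ℝ V]
  [NormedAddCommGroup E] [InnerProductSpace ℝ E] (L : ι → V →ₗ[ℝ] E) (y : ι → E)
  {A₀ : V} {I : Finset ι}

theorem exists_subgradient_of_forall_sum_norm_sub_le [CompleteSpace E]
    (hI : ∀ t, t ∈ I ↔ y t = L t A₀)
    (hmin : ∀ A, ∑ t, ‖y t - L t A₀‖ ≤ ∑ t, ‖y t - L t A‖) :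
    ∃ β : ι → E, (∀ t ∈ I, ‖β t‖ ≤ 1) ∧ ∀ D, ∑ t ∈ Iᶜ,
      ⟪‖y t - L t A₀‖⁻¹ • (y t - L t A₀), L t D⟫ + ∑ t ∈ I, ⟪β t, L t D⟫ = 0 := by
  set v := fun t => ‖y t - L t A₀‖⁻¹ • (y t - L t A₀)
  have hdir : ∀ D, ∑ t ∈ Iᶜ, ⟪v t, L t D⟫ ≤ ∑ t ∈ I, ‖L t D‖ := fun D =>
    sum_inner_le_sum_norm_of_forall_sum_norm_le (by simpa [sub_eq_zero] using hI) _
      fun ε _ => by simpa [sub_sub] using hmin (A₀ + ε • D)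
  obtain ⟨β, hβ, hβD⟩ := exists_forall_eq_sum_inner_of_le_sum_norm I L
    (-∑ t ∈ Iᶜ, innerₛₗ ℝ (v t) ∘ₗ L t) fun D => by simpa using hdir (-D)
  refine ⟨β, fun t _ => hβ t, fun D => ?_⟩
  have hD := hβD D
  simp only [LinearMap.neg_apply, LinearMap.coe_sum, LinearMap.coe_comp, coe_innerₛₗ_apply,
    Finset.sum_apply, Function.comp_apply] at hD
  linarith

theorem forall_sum_norm_sub_le_of_exists_subgradient (hI : ∀ t ∈ I, y t = L t A₀)
    {β : ι → E} (hβ : ∀ t ∈ I, ‖β t‖ ≤ 1) (hβD : ∀ D, ∑ t ∈ Iᶜ,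
      ⟪‖y t - L t A₀‖⁻¹ • (y t - L t A₀), L t D⟫ + ∑ t ∈ I, ⟪β t, L t D⟫ = 0) (A : V) :
    ∑ t, ‖y t - L t A₀‖ ≤ ∑ t, ‖y t - L t A‖ := by
  set r := fun t => y t - L t A₀
  set γ := fun t => if t ∈ I then β t else ‖r t‖⁻¹ • r t
  have hγ : ∀ t, ‖γ t‖ ≤ 1 ∧ ⟪γ t, r t⟫ = ‖r t‖ := fun t => by
    by_cases ht : t ∈ I
    · simp [γ, ht, r, hI t ht, hβ t ht]
    · simp [γ, ht, norm_inv_norm_smul_le_one, real_inner_inv_norm_smul_self]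
  have hγD : ∑ t, ⟪γ t, L t (A₀ - A)⟫ = 0 := by
    rw [← hβD (A₀ - A), ← sum_add_sum_compl I, add_comm]
    congr 1 <;> refine sum_congr rfl fun t ht => ?_
    · simp [γ, r, mem_compl.mp ht]
    · simp [γ, ht]
  calc ∑ t, ‖r t‖ = ∑ t, (‖r t‖ + ⟪γ t, L t (A₀ - A)⟫) := by
        rw [sum_add_distrib, hγD, add_zero]
    _ ≤ ∑ t, ‖r t + L t (A₀ - A)‖ := sum_le_sum fun t _ =>
        norm_add_real_inner_le_norm_add (hγ t).1 (hγ t).2 _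
    _ = ∑ t, ‖y t - L t A‖ := by simp [r, map_sub]

theorem forall_sum_norm_sub_le_iff [CompleteSpace E] (hI : ∀ t, t ∈ I ↔ y t = L t A₀) :
    (∀ A, ∑ t, ‖y t - L t A₀‖ ≤ ∑ t, ‖y t - L t A‖) ↔
      ∃ β : ι → E, (∀ t ∈ I, ‖β t‖ ≤ 1) ∧ ∀ D, ∑ t ∈ Iᶜ,
        ⟪‖y t - L t A₀‖⁻¹ • (y t - L t A₀), L t D⟫ + ∑ t ∈ I, ⟪β t, L t D⟫ = 0 :=
  ⟨exists_subgradient_of_forall_sum_norm_sub_le L y hI, fun ⟨_, hβ, hβD⟩ =>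
    forall_sum_norm_sub_le_of_exists_subgradient L y (fun t => (hI t).mp) hβ hβD⟩

end LinearModel

namespace Matrix

variable {m n R : Type*} [Fintype m] [Fintype n] [CommSemiring R]

lemma trace_transpose_mul_vecMulVec (D : Matrix m n R) (b : m → R) (x : n → R) :
    trace (Dᵀ * vecMulVec b x) = b ⬝ᵥ (D *ᵥ x) := by
  simp only [trace, diag, mul_apply, transpose_apply, vecMulVec_apply, dotProduct, mulVec,
    mul_sum]
  rw [sum_comm]
  exact sum_congr rfl fun i _ => sum_congr rfl fun j _ => by ring

lemma eq_zero_iff_forall_trace_transpose_mul {M : Matrix m n R} :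
    M = 0 ↔ ∀ D : Matrix m n R, trace (Dᵀ * M) = 0 := by
  rw [ext_iff_trace_mul_left, (transposeAddEquiv n m R).forall_congr_left]
  simp

end Matrix

lemma enorm_eq_norm_toLp {m : ℕ} (v : Fin m → ℝ) : enorm m v = ‖WithLp.toLp 2 v‖ := by
  rw [EuclideanSpace.norm_eq]
  exact congrArg Real.sqrt (sum_congr rfl fun i _ => (sq_abs (v i)).symm)

theorem stmt17_general (n m N : ℕ)
    (x : Fin N → Fin n → ℝ) (y : Fin N → Fin m → ℝ)
    (As : Matrix (Fin m) (Fin n) ℝ) :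
    (∀ A : Matrix (Fin m) (Fin n) ℝ,
        ∑ t, enorm m (y t - As *ᵥ x t) ≤ ∑ t, enorm m (y t - A *ᵥ x t)) ↔
      (∃ β : Fin N → Fin m → ℝ,
        (∀ t ∈ univ.filter (fun t => y t = As *ᵥ x t), enorm m (β t) ≤ 1) ∧
        (∑ t ∈ (univ.filter (fun t => y t = As *ᵥ x t))ᶜ,
            Matrix.vecMulVec ((enorm m (y t - As *ᵥ x t))⁻¹ • (y t - As *ᵥ x t)) (x t))
          + (∑ t ∈ univ.filter (fun t => y t = As *ᵥ x t),
              Matrix.vecMulVec (β t) (x t)) = 0) := by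
  let L : Fin N → Matrix (Fin m) (Fin n) ℝ →ₗ[ℝ] EuclideanSpace ℝ (Fin m) := fun t =>
    (WithLp.linearEquiv 2 ℝ (Fin m → ℝ)).symm ∘ₗ (mulVecBilin ℝ ℝ).flip (x t)
  have hL : ∀ t A, L t A = WithLp.toLp 2 (A *ᵥ x t) := fun _ _ => rfl
  have hres : ∀ t A, enorm m (y t - A *ᵥ x t) = ‖WithLp.toLp 2 (y t) - L t A‖ := by
    simp [hL, enorm_eq_norm_toLp]
  simp only [hres]
  rw [forall_sum_norm_sub_le_iff L (fun t => WithLp.toLp 2 (y t))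
    (I := univ.filter fun t => y t = As *ᵥ x t) (by simp [hL])]
  refine (Equiv.piCongrRight fun _ => WithLp.equiv 2 (Fin m → ℝ)).exists_congr' fun β => ?_
  refine and_congr (by simp [enorm_eq_norm_toLp]) ?_
  rw [eq_zero_iff_forall_trace_transpose_mul]
  simp [Matrix.mul_add, Matrix.mul_sum, trace_transpose_mul_vecMulVec, hL,
    EuclideanSpace.inner_toLp_toLp, dotProduct_comm, real_inner_smul_left, inner_sub_left]

/-- `A*` solves the sum-of-norms problem iff there exist vectors
`β_t` with `‖β_t‖₂ ≤ 1` for `t ∈ I⁰(A*)` such that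
`∑_{t ∉ I⁰(A*)} v*_t x_t^⊤ + ∑_{t ∈ I⁰(A*)} β_t x_t^⊤ = 0`, where
`v*_t = (y_t − A* x_t)/‖y_t − A* x_t‖₂`. -/
theorem stmt17 (n m N : ℕ) (hn : 1 ≤ n) (hm : 1 ≤ m) (hN : 1 ≤ N)
    (x : Fin N → Fin n → ℝ) (y : Fin N → Fin m → ℝ)
    (As : Matrix (Fin m) (Fin n) ℝ) :
    (∀ A : Matrix (Fin m) (Fin n) ℝ,
        ∑ t, enorm m (y t - As *ᵥ x t) ≤ ∑ t, enorm m (y t - A *ᵥ x t)) ↔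
      (∃ β : Fin N → Fin m → ℝ,
        (∀ t ∈ univ.filter (fun t => y t = As *ᵥ x t), enorm m (β t) ≤ 1) ∧
        (∑ t ∈ (univ.filter (fun t => y t = As *ᵥ x t))ᶜ,
            Matrix.vecMulVec ((enorm m (y t - As *ᵥ x t))⁻¹ • (y t - As *ᵥ x t)) (x t))
          + (∑ t ∈ univ.filter (fun t => y t = As *ᵥ x t),
              Matrix.vecMulVec (β t) (x t)) = 0) :=
  stmt17_general n m N x y As
end

section
/- Let y_1, …, y_N ∈ ℝ^m and a^o ∈ ℝ^m. If at least half of the points coincide with a^o, i.e., |{t ∈ {1, …, N} : y_t = a^o}| ≥ N/2, then a^o solves the geometric median problem: Σ_{t=1}^N ‖y_t − a^o‖₂ ≤ Σ_{t=1}^N ‖y_t − a‖₂ for all a ∈ ℝ^m. -/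
open Matrix Finset

/-! If `S` is the set of indices with `y t = x`, the triangle inequality through `a` gives
`∑_{t ∉ S} d(y t, x) ≤ ∑_{t ∉ S} d(y t, a) + #Sᶜ · d(a, x)`, and the majority condition
`#Sᶜ ≤ #S` lets the points of `S` pay for the last term, since each contributes `d(x, a)`
to the cost at `a` and nothing to the cost at `x`. -/

theorem sum_dist_le_sum_dist_of_card_fiber_ge_half {ι α : Type*} [Fintype ι]
    [PseudoMetricSpace α] [DecidableEq α] (y : ι → α) (x : α)
    (hcard : ((univ.filter (fun t => y t = x)).card : ℝ) ≥ (Fintype.card ι : ℝ) / 2)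
    (a : α) : ∑ t, dist (y t) x ≤ ∑ t, dist (y t) a := by
  set S := univ.filter (fun t => y t = x)
  set T := univ.filter (fun t => ¬y t = x)
  have hS : ∀ t ∈ S, y t = x := fun t ht => (mem_filter.1 ht).2
  have hT_le : (T.card : ℝ) ≤ S.card := by
    have : (S.card : ℝ) + T.card = Fintype.card ι := by
      exact_mod_cast card_filter_add_card_filter_not _
    linarith
  have cost_at_x : ∑ t, dist (y t) x = ∑ t ∈ T, dist (y t) x := by
    rw [← sum_filter_add_sum_filter_not univ (fun t => y t = x),
      sum_eq_zero fun t ht => by rw [hS t ht, dist_self], zero_add]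
  have cost_at_a : ∑ t, dist (y t) a = S.card * dist a x + ∑ t ∈ T, dist (y t) a := by
    rw [← sum_filter_add_sum_filter_not univ (fun t => y t = x),
      sum_congr rfl fun t ht => by rw [hS t ht, dist_comm], sum_const, nsmul_eq_mul]
  have triangle : ∑ t ∈ T, dist (y t) x ≤ ∑ t ∈ T, dist (y t) a + T.card * dist a x := by
    rw [← nsmul_eq_mul, ← sum_const, ← sum_add_distrib]
    exact sum_le_sum fun t _ => dist_triangle _ _ _
  have := mul_le_mul_of_nonneg_right hT_le (dist_nonneg (x := a) (y := x))
  linarith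

theorem enorm_sub_eq_dist (m : ℕ) (u v : Fin m → ℝ) :
    enorm m (u - v) = dist (WithLp.toLp 2 u : EuclideanSpace ℝ (Fin m)) (WithLp.toLp 2 v) := by
  simp [_root_.enorm, EuclideanSpace.dist_eq, Real.dist_eq, sq_abs]

theorem stmt19_general (m N : ℕ)
    (y : Fin N → Fin m → ℝ) (ao : Fin m → ℝ)
    (hcard : ((univ.filter (fun t => y t = ao)).card : ℝ) ≥ (N : ℝ) / 2) :
    ∀ a : Fin m → ℝ, ∑ t, enorm m (y t - ao) ≤ ∑ t, enorm m (y t - a) := by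
  intro a
  simp only [enorm_sub_eq_dist]
  refine sum_dist_le_sum_dist_of_card_fiber_ge_half (fun t => WithLp.toLp 2 (y t)) _ ?_ _
  simpa only [Fintype.card_fin, (WithLp.toLp_injective 2).eq_iff] using hcard

/-- If at least half of the points `y_1, …, y_N ∈ ℝ^m` coincide
with `a^o`, then `a^o` solves the geometric median problem. -/
theorem stmt19 (m N : ℕ) (hm : 1 ≤ m) (hN : 1 ≤ N)
    (y : Fin N → Fin m → ℝ) (ao : Fin m → ℝ)
    (hcard : ((univ.filter (fun t => y t = ao)).card : ℝ) ≥ (N : ℝ) / 2) :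
    ∀ a : Fin m → ℝ, ∑ t, enorm m (y t - ao) ≤ ∑ t, enorm m (y t - a) :=
  stmt19_general m N y ao hcard
end
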